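/- arXiv:1508.03020 — 11 statements merged into one kernel-verified Lean document; each statement's English description precedes it below -/
import Mathlib

section
/- For even q ≥ 2 and any n, d, the maximum size of a code in (Z/qZ)^n with minimum distance at least d (under the cycle semimetric extended additively) equals (q/2)^n times the maximum size of a binary code of length n with minimum Hamming distance at least d. -/
open Finset

/-- The cycle semimetric on `ZMod q`: 0 if equal, 1 if adjacent on the cycle, ∞ otherwise. -/
def cycDist (q : ℕ) (v v' : ZMod q) : ℕ∞ :=
  if v = v' then 0 else if v - v' = 1 ∨ v' - v = 1 then 1 else ⊤

/-- Additive extension of the cycle semimetric to `(ZMod q)^n`. -/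
def cycDistN {q n : ℕ} (x y : Fin n → ZMod q) : ℕ∞ :=
  ∑ i, cycDist q (x i) (y i)

/-- Maximum size of a code in `(ZMod q)^n` with minimum cycle-semimetric distance at least `d`. -/
noncomputable def M (q n d : ℕ) : ℕ :=
  sSup {m | ∃ C : Finset (Fin n → ZMod q), C.card = m ∧
    ∀ x ∈ C, ∀ y ∈ C, x ≠ y → (d : ℕ∞) ≤ cycDistN x y}

lemma zmod2_sub_eq_one : ∀ {a b : ZMod 2}, a ≠ b → a - b = 1 := by decide

lemma zmod2_ne_add_one : ∀ a : ZMod 2, a ≠ a + 1 := by decide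

lemma adj_parity {q : ℕ} [NeZero q] (he : 2 ∣ q) {v w : ZMod q}
    (h : v - w = 1 ∨ w - v = 1) : ((v.val : ZMod 2)) ≠ ((w.val : ZMod 2)) := by
  have hv : (v.val : ZMod 2) = ZMod.castHom he (ZMod 2) v := by
    rw [ZMod.castHom_apply, ZMod.natCast_val]
  have hw : (w.val : ZMod 2) = ZMod.castHom he (ZMod 2) w := by
    rw [ZMod.castHom_apply, ZMod.natCast_val]
  rw [hv, hw]
  intro heq
  rcases h with h | h
  · have := congrArg (ZMod.castHom he (ZMod 2)) h
    rw [map_sub, map_one, heq, sub_self] at this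
    exact one_ne_zero this.symm
  · have := congrArg (ZMod.castHom he (ZMod 2)) h
    rw [map_sub, map_one, heq, sub_self] at this
    exact one_ne_zero this.symm

lemma le_cycDist {q : ℕ} [NeZero q] (he : 2 ∣ q) (v w : ZMod q) :
    cycDist 2 (v.val : ZMod 2) (w.val : ZMod 2) ≤ cycDist q v w := by
  unfold cycDist
  by_cases hvw : v = w
  · subst hvw; simp
  · rw [if_neg hvw]
    by_cases hadj : v - w = 1 ∨ w - v = 1
    · rw [if_pos hadj]
      have hne := adj_parity he hadj
      rw [if_neg hne, if_pos (Or.inl (zmod2_sub_eq_one hne))]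
    · rw [if_neg hadj]; exact le_top

lemma cycDist_top {q : ℕ} [NeZero q] (he : 2 ∣ q) {v w : ZMod q} (hne : v ≠ w)
    (hp : (v.val : ZMod 2) = (w.val : ZMod 2)) : cycDist q v w = ⊤ := by
  unfold cycDist
  rw [if_neg hne, if_neg]
  intro h; exact adj_parity he h hp

lemma cycDist_one {q : ℕ} [NeZero q] {v w : ZMod q} (h : w.val = v.val + 1) :
    cycDist q v w = 1 := by
  have hvw : v ≠ w := by
    intro heq; rw [heq] at h; omega
  have hadj : w - v = 1 := by
    have : (w.val : ZMod q) - (v.val : ZMod q) = 1 := by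
      rw [h, Nat.cast_add, Nat.cast_one]; ring
    rwa [ZMod.natCast_val, ZMod.natCast_val, ZMod.cast_id, ZMod.cast_id] at this
  unfold cycDist
  rw [if_neg hvw, if_pos (Or.inr hadj)]

lemma cycDist_fiber {q : ℕ} [NeZero q] (he : 2 ∣ q) {v w : ZMod q}
    (hf : v.val / 2 = w.val / 2) :
    cycDist q v w = cycDist 2 (v.val : ZMod 2) (w.val : ZMod 2) := by
  by_cases hvw : v = w
  · subst hvw; unfold cycDist; simp
  · have hval : v.val ≠ w.val := fun h => hvw (ZMod.val_injective q h)
    have hcase : w.val = v.val + 1 ∨ v.val = w.val + 1 := by omega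
    have key : ∀ {a b : ZMod q}, b.val = a.val + 1 →
        cycDist q a b = cycDist 2 (a.val : ZMod 2) (b.val : ZMod 2) := by
      intro a b h
      rw [cycDist_one h]
      have hp : (b.val : ZMod 2) = (a.val : ZMod 2) + 1 := by
        rw [h]; push_cast; ring
      have hne2 : (a.val : ZMod 2) ≠ (b.val : ZMod 2) := by
        rw [hp]; exact zmod2_ne_add_one _
      unfold cycDist
      rw [if_neg hne2, if_pos (Or.inl (zmod2_sub_eq_one hne2))]
    rcases hcase with h | h
    · exact key h
    · have := key (a := w) (b := v) h
      have hsymm : ∀ (r : ℕ) (a b : ZMod r), cycDist r a b = cycDist r b a := by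
        intro r a b
        unfold cycDist
        by_cases hab : a = b
        · subst hab; simp
        · rw [if_neg hab, if_neg (Ne.symm hab)]
          by_cases h1 : a - b = 1 ∨ b - a = 1
          · rw [if_pos h1, if_pos h1.symm]
          · rw [if_neg h1, if_neg fun h => h1 h.symm]
      rw [hsymm q v w, hsymm 2, this]

lemma bddAbove_codes (q n d : ℕ) [NeZero q] :
    BddAbove {m | ∃ C : Finset (Fin n → ZMod q), C.card = m ∧
      ∀ x ∈ C, ∀ y ∈ C, x ≠ y → (d : ℕ∞) ≤ cycDistN x y} := by
  refine ⟨Fintype.card (Fin n → ZMod q), ?_⟩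
  rintro m ⟨C, rfl, -⟩
  exact C.card_le_univ

lemma M_mem (q n d : ℕ) [NeZero q] :
    ∃ C : Finset (Fin n → ZMod q), C.card = M q n d ∧
      ∀ x ∈ C, ∀ y ∈ C, x ≠ y → (d : ℕ∞) ≤ cycDistN x y := by
  have : M q n d ∈ {m | ∃ C : Finset (Fin n → ZMod q), C.card = m ∧
      ∀ x ∈ C, ∀ y ∈ C, x ≠ y → (d : ℕ∞) ≤ cycDistN x y} :=
    Nat.sSup_mem ⟨0, ∅, by simp⟩ (bddAbove_codes q n d)
  exact this

lemma le_M {q n d m : ℕ} [NeZero q]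
    (h : ∃ C : Finset (Fin n → ZMod q), C.card = m ∧
      ∀ x ∈ C, ∀ y ∈ C, x ≠ y → (d : ℕ∞) ≤ cycDistN x y) : m ≤ M q n d :=
  le_csSup (bddAbove_codes q n d) h

theorem stmt0 (q n d : ℕ) (hq : 2 ≤ q) (he : Even q) :
    M q n d = (q / 2) ^ n * M 2 n d := by
  haveI : NeZero q := ⟨by omega⟩
  have h2 : q % 2 = 0 := Nat.even_iff.mp he
  set k := q / 2 with hkdef
  have hk : q = 2 * k := by omega
  have hkpos : 1 ≤ k := by omega
  have hdvd : 2 ∣ q := ⟨k, hk⟩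
  apply le_antisymm
  · -- upper bound
    obtain ⟨C, hCcard, hC⟩ := M_mem q n d
    rw [← hCcard]
    have hval2 : ∀ v : ZMod q, v.val / 2 < k := by
      intro v; have := ZMod.val_lt v; omega
    set G : (Fin n → ZMod q) → (Fin n → Fin k) :=
      fun x i => ⟨(x i).val / 2, hval2 _⟩ with hG
    rw [Finset.card_eq_sum_card_fiberwise (t := univ) (f := G) (fun x _ => mem_univ _)]
    have hfiber : ∀ a : Fin n → Fin k,
        (C.filter fun x => G x = a).card ≤ M 2 n d := by
      intro a
      set Ca := C.filter fun x => G x = a with hCa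
      have hsame : ∀ x ∈ Ca, ∀ y ∈ Ca, ∀ i, (x i).val / 2 = (y i).val / 2 := by
        intro x hx y hy i
        have hx' := (mem_filter.mp hx).2
        have hy' := (mem_filter.mp hy).2
        have := congrFun hx' i
        have := congrFun hy' i
        have h1 : (⟨(x i).val / 2, hval2 _⟩ : Fin k) = a i := congrFun hx' i
        have h2' : (⟨(y i).val / 2, hval2 _⟩ : Fin k) = a i := congrFun hy' i
        have := h1.trans h2'.symm
        exact Fin.mk.inj_iff.mp this
      set H : (Fin n → ZMod q) → (Fin n → ZMod 2) :=
        fun x i => ((x i).val : ZMod 2) with hH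
      have hinj : ∀ x ∈ Ca, ∀ y ∈ Ca, H x = H y → x = y := by
        intro x hx y hy hxy
        funext i
        apply ZMod.val_injective
        have hq2 : (x i).val / 2 = (y i).val / 2 := hsame x hx y hy i
        have hp : ((x i).val : ZMod 2) = ((y i).val : ZMod 2) := congrFun hxy i
        have hp' : (x i).val % 2 = (y i).val % 2 := by
          have := congrArg ZMod.val hp
          rwa [ZMod.val_natCast, ZMod.val_natCast] at this
        omega
      have himg : (Ca.image H).card = Ca.card := Finset.card_image_of_injOn hinj
      rw [← himg]
      apply le_M
      refine ⟨Ca.image H, rfl, ?_⟩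
      intro u hu w hw huw
      obtain ⟨x, hx, rfl⟩ := mem_image.mp hu
      obtain ⟨y, hy, rfl⟩ := mem_image.mp hw
      have hxy : x ≠ y := fun h => huw (by rw [h])
      have hd := hC x (mem_filter.mp hx).1 y (mem_filter.mp hy).1 hxy
      refine le_trans hd ?_
      unfold cycDistN
      apply le_of_eq
      apply Finset.sum_congr rfl
      intro i _
      exact cycDist_fiber hdvd (hsame x hx y hy i)
    calc ∑ a : Fin n → Fin k, (C.filter fun x => G x = a).card
        ≤ ∑ _a : Fin n → Fin k, M 2 n d := Finset.sum_le_sum fun a _ => hfiber a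
      _ = k ^ n * M 2 n d := by
          rw [Finset.sum_const, smul_eq_mul, Finset.card_univ, Fintype.card_fun]
          simp
  · -- lower bound
    obtain ⟨C₂, hc2card, hC₂⟩ := M_mem 2 n d
    set f : ((Fin n → Fin k) × (Fin n → ZMod 2)) → (Fin n → ZMod q) :=
      fun p i => ((2 * (p.1 i : ℕ) + (p.2 i).val : ℕ) : ZMod q) with hf
    have hvalf : ∀ p i, (f p i).val = 2 * (p.1 i : ℕ) + (p.2 i).val := by
      intro p i
      apply ZMod.val_cast_of_lt
      have h1 : (p.1 i : ℕ) < k := (p.1 i).isLt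
      have h2' : (p.2 i).val < 2 := ZMod.val_lt _
      omega
    have hparf : ∀ p i, ((f p i).val : ZMod 2) = p.2 i := by
      intro p i
      rw [hvalf]
      push_cast
      rw [ZMod.natCast_val, ZMod.cast_id]
      have h20 : (2 : ZMod 2) = 0 := by decide
      rw [h20, zero_mul, zero_add]
    have hinjf : Function.Injective f := by
      intro p p' hpp
      have hv : ∀ i, (f p i).val = (f p' i).val := fun i =>
        congrArg ZMod.val (congrFun hpp i)
      have hab : ∀ i, (p.1 i : ℕ) = (p'.1 i : ℕ) ∧ (p.2 i).val = (p'.2 i).val := by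
        intro i
        have := hv i
        rw [hvalf, hvalf] at this
        have h2a : (p.2 i).val < 2 := ZMod.val_lt _
        have h2b : (p'.2 i).val < 2 := ZMod.val_lt _
        omega
      have h1 : p.1 = p'.1 := funext fun i => Fin.val_injective (hab i).1
      have h2' : p.2 = p'.2 := funext fun i => ZMod.val_injective 2 (hab i).2
      exact Prod.ext h1 h2'
    have hcard : ((univ ×ˢ C₂).image f).card = k ^ n * M 2 n d := by
      rw [Finset.card_image_of_injective _ hinjf, Finset.card_product,
        Finset.card_univ, Fintype.card_fun, hc2card]
      simp
    rw [← hcard]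
    apply le_M
    refine ⟨(univ ×ˢ C₂).image f, rfl, ?_⟩
    intro u hu w hw huw
    obtain ⟨p, hp, rfl⟩ := mem_image.mp hu
    obtain ⟨p', hp', rfl⟩ := mem_image.mp hw
    have hpp : p ≠ p' := fun h => huw (by rw [h])
    have hp2 : p.2 ∈ C₂ := (Finset.mem_product.mp hp).2
    have hp2' : p'.2 ∈ C₂ := (Finset.mem_product.mp hp').2
    by_cases hb : p.2 = p'.2
    · -- pick a coordinate where first components differ
      have ha : p.1 ≠ p'.1 := by
        intro h; exact hpp (Prod.ext h hb)
      obtain ⟨i, hi⟩ : ∃ i, p.1 i ≠ p'.1 i := by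
        by_contra hcon
        push_neg at hcon
        exact ha (funext hcon)
      have hne : f p i ≠ f p' i := by
        intro h
        have := congrArg ZMod.val h
        rw [hvalf, hvalf, hb] at this
        have : (p.1 i : ℕ) = (p'.1 i : ℕ) := by omega
        exact hi (Fin.val_injective this)
      have htop : cycDist q (f p i) (f p' i) = ⊤ := by
        apply cycDist_top hdvd hne
        rw [hparf, hparf, hb]
      calc (d : ℕ∞) ≤ ⊤ := le_top
        _ = cycDist q (f p i) (f p' i) := htop.symm
        _ ≤ cycDistN (f p) (f p') := by
            unfold cycDistN
            exact Finset.single_le_sum (f := fun j => cycDist q (f p j) (f p' j))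
              (fun j _ => zero_le) (mem_univ i)
    · have hd := hC₂ p.2 hp2 p'.2 hp2' hb
      refine le_trans hd ?_
      unfold cycDistN
      apply Finset.sum_le_sum
      intro i _
      have := le_cycDist hdvd (f p i) (f p' i)
      rwa [hparf, hparf] at this
end

section
/- For even q, and any code C' ⊆ {0,1}^n of minimum Hamming distance d, the sumset C^+ = C + C' where C = {0,2,...,q-2}^n is a code in (Z/qZ)^n of size (q/2)^n · |C'| with minimum cycle-semimetric distance at least d. More precisely, for any two distinct codewords x+x', y+y' in C^+ with x,y ∈ C and x',y' ∈ C': if x' = y' then d(x+x', y+y') = ∞, and otherwise d(x+x', y+y') ≥ d. -/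
open Finset Pointwise

theorem stmt1 (q n d : ℕ) (hq : 2 ≤ q) (he : Even q)
    (C' : Finset (Fin n → ZMod q))
    (hbin : ∀ c ∈ C', ∀ i, c i = 0 ∨ c i = 1)
    (hd : ∀ x ∈ C', ∀ y ∈ C', x ≠ y →
      d ≤ (Finset.univ.filter fun i => x i ≠ y i).card)
    (C : Finset (Fin n → ZMod q))
    (hC : ∀ x, x ∈ C ↔ ∀ i, ∃ m : ℕ, x i = (2 * m : ℕ)) :
    (C + C').card = (q / 2) ^ n * C'.card ∧
    ∀ x ∈ C, ∀ x' ∈ C', ∀ y ∈ C, ∀ y' ∈ C', x + x' ≠ y + y' →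
      (if x' = y' then cycDistN (x + x') (y + y') = ⊤
       else (d : ℕ∞) ≤ cycDistN (x + x') (y + y')) := by
  have h2 : (2:ℕ) ∣ q := he.two_dvd
  haveI : NeZero q := ⟨by omega⟩
  set φ : ZMod q →+* ZMod 2 := ZMod.castHom h2 (ZMod 2) with hφ
  -- even elements map to 0
  have hev : ∀ x : ZMod q, (∃ m : ℕ, x = ((2*m : ℕ) : ZMod q)) → φ x = 0 := by
    rintro x ⟨m, rfl⟩
    rw [map_natCast]
    push_cast
    rw [show (2 : ZMod 2) = 0 from rfl, zero_mul]
  -- injectivity on bits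
  have hbit : ∀ a b : ZMod q, (a = 0 ∨ a = 1) → (b = 0 ∨ b = 1) → φ a = φ b → a = b := by
    rintro a b (rfl|rfl) (rfl|rfl) h
    · rfl
    · exact absurd (by simpa using h) (show (0:ZMod 2) ≠ 1 by decide)
    · exact absurd (by simpa using h) (show (1:ZMod 2) ≠ 0 by decide)
    · rfl
  -- injectivity of the addition map
  have hinj : ∀ x ∈ C, ∀ x' ∈ C', ∀ y ∈ C, ∀ y' ∈ C', x + x' = y + y' → x = y ∧ x' = y' := by
    intro x hx x' hx' y hy y' hy' h
    have key : ∀ i, x' i = y' i := by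
      intro i
      have hi : x i + x' i = y i + y' i := congrFun h i
      have := congrArg φ hi
      rw [map_add, map_add, hev _ ((hC x).1 hx i), hev _ ((hC y).1 hy i), zero_add,
        zero_add] at this
      exact hbit _ _ (hbin x' hx' i) (hbin y' hy' i) this
    have hy'x' : x' = y' := funext key
    refine ⟨funext fun i => ?_, hy'x'⟩
    have hi : x i + x' i = y i + y' i := congrFun h i
    rw [← key i] at hi
    exact add_right_cancel hi
  constructor
  · -- cardinality
    have hq2 : 0 < q / 2 := by omega
    set Eset : Finset (ZMod q) :=
      Finset.image (fun m : Fin (q/2) => ((2 * (m:ℕ) : ℕ) : ZMod q)) Finset.univ with hE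
    have hEmem : ∀ x : ZMod q, x ∈ Eset ↔ ∃ m : ℕ, x = ((2*m : ℕ) : ZMod q) := by
      intro x
      constructor
      · rintro hx
        rw [hE, Finset.mem_image] at hx
        obtain ⟨m, -, rfl⟩ := hx
        exact ⟨m, rfl⟩
      · rintro ⟨m, rfl⟩
        rw [hE, Finset.mem_image]
        refine ⟨⟨m % (q/2), Nat.mod_lt _ hq2⟩, Finset.mem_univ _, ?_⟩
        have : (2 * (m % (q/2)) : ℕ) ≡ 2 * m [MOD q] := by
          have := (Nat.mod_modEq m (q/2)).mul_left' (c := 2)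
          rwa [Nat.mul_div_cancel' h2] at this
        exact (ZMod.natCast_eq_natCast_iff _ _ _).2 this
    have hEcard : Eset.card = q / 2 := by
      rw [hE, Finset.card_image_of_injective _ ?_, Finset.card_univ, Fintype.card_fin]
      intro a b hab
      have ha : (2 * (a:ℕ)) < q := by omega
      have hb : (2 * (b:ℕ)) < q := by omega
      have := congrArg ZMod.val hab
      rw [ZMod.val_cast_of_lt ha, ZMod.val_cast_of_lt hb] at this
      exact Fin.ext (by omega)
    have hCeq : C = Fintype.piFinset (fun _ : Fin n => Eset) := by
      ext x
      rw [hC, Fintype.mem_piFinset]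
      exact forall_congr' fun i => (hEmem (x i)).symm
    have hCcard : C.card = (q/2)^n := by
      rw [hCeq, Fintype.card_piFinset]
      simp [hEcard]
    rw [← hCcard]
    rw [show C + C' = Finset.image₂ (· + ·) C C' from rfl]
    rw [Finset.card_image₂_iff]
    rintro ⟨x, x'⟩ hx ⟨y, y'⟩ hy h
    simp only [Set.mem_prod, Finset.mem_coe] at hx hy
    obtain ⟨h1, h2'⟩ := hinj x hx.1 x' hx.2 y hy.1 y' hy.2 h
    exact Prod.ext h1 h2'
  · -- distance
    intro x hx x' hx' y hy y' hy' hne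
    split_ifs with h
    · subst h
      have hxy : x ≠ y := fun hxy => hne (by rw [hxy])
      obtain ⟨i, hi⟩ := Function.ne_iff.1 hxy
      rw [cycDistN, ENat.sum_eq_top]
      refine ⟨i, Finset.mem_univ i, ?_⟩
      rw [Pi.add_apply, Pi.add_apply, cycDist, if_neg, if_neg]
      · rintro (h1 | h1)
        · rw [show x i + x' i - (y i + x' i) = x i - y i by ring] at h1
          have := congrArg φ h1
          rw [map_sub, hev _ ((hC x).1 hx i), hev _ ((hC y).1 hy i), map_one, sub_zero] at this
          exact absurd this (by decide)
        · rw [show y i + x' i - (x i + x' i) = y i - x i by ring] at h1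
          have := congrArg φ h1
          rw [map_sub, hev _ ((hC x).1 hx i), hev _ ((hC y).1 hy i), map_one, sub_zero] at this
          exact absurd this (by decide)
      · intro h1
        exact hi (add_right_cancel h1)
    · set S := Finset.univ.filter fun i => x' i ≠ y' i with hS
      have hstep : ∀ i ∈ S, (1 : ℕ∞) ≤ cycDist q ((x + x') i) ((y + y') i) := by
        intro i hiS
        rw [hS, Finset.mem_filter] at hiS
        have hne' : (x + x') i ≠ (y + y') i := by
          intro heq
          rw [Pi.add_apply, Pi.add_apply] at heq
          have := congrArg φ heq
          rw [map_add, map_add, hev _ ((hC x).1 hx i), hev _ ((hC y).1 hy i), zero_add,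
            zero_add] at this
          exact hiS.2 (hbit _ _ (hbin x' hx' i) (hbin y' hy' i) this)
        rw [cycDist, if_neg hne']
        split_ifs
        · exact le_refl _
        · exact le_top
      calc (d : ℕ∞) ≤ (S.card : ℕ∞) := Nat.cast_le.2 (hd x' hx' y' hy' h)
        _ = ∑ _i ∈ S, (1 : ℕ∞) := by simp
        _ ≤ ∑ i ∈ S, cycDist q ((x + x') i) ((y + y') i) := Finset.sum_le_sum hstep
        _ ≤ cycDistN (x + x') (y + y') :=
            Finset.sum_le_sum_of_subset (Finset.subset_univ S)
end

section
/- For any code C ⊆ (Z/qZ)^n with minimum cycle-semimetric distance at least d, and any clique cover of the strong power graph C_q^n of size χ̄(C_q^n), there exists a clique containing at least ⌈|C|/χ̄(C_q^n)⌉ codewords, and the codewords in any single clique of C_q^n can be injectively mapped to binary words of length n preserving pairwise distances; consequently M_q(n,d) ≤ χ̄(C_q^n) · M_2(n,d). -/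
open Finset

/-- A clique of the strong power `C_q^n`: a set of sequences which in each coordinate lie
within a common edge (a pair of adjacent-or-equal vertices) of the cycle. -/
def IsEdgeClique (q n : ℕ) (K : Finset (Fin n → ZMod q)) : Prop :=
  ∃ e : Fin n → ZMod q, ∀ x ∈ K, ∀ i, x i = e i ∨ x i = e i + 1

/-!
Every clique of `C_q^n` is contained in a product of edges `{e i, e i + 1}`; recording in each
coordinate which end of its edge a word uses is an isometry onto binary words, so the codewords
inside one clique form a binary code of the same minimum distance and there are at most
`M 2 n d` of them. Covering a code by `χ̄` cliques then bounds its size by `χ̄ · M 2 n d`, and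
pigeonhole gives a clique holding at least `⌈|C| / χ̄⌉` codewords.
-/

lemma cycDist_eq_zero_iff {q : ℕ} {a b : ZMod q} : cycDist q a b = 0 ↔ a = b := by
  unfold cycDist
  split_ifs <;> simp_all

lemma cycDistN_eq_zero_iff {q n : ℕ} {x y : Fin n → ZMod q} : cycDistN x y = 0 ↔ x = y := by
  simp only [cycDistN, Finset.sum_eq_zero_iff, Finset.mem_univ, true_implies,
    cycDist_eq_zero_iff, funext_iff]

/-- `(c + #s - 1) / #s` is `⌈c / #s⌉`. -/
lemma Finset.exists_ceilDiv_le_of_le_sum {ι : Type*} {s : Finset ι} (hs : s.Nonempty) {f : ι → ℕ}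
    {c : ℕ} (h : c ≤ ∑ i ∈ s, f i) : ∃ i ∈ s, (c + #s - 1) / #s ≤ f i := by
  by_contra! hlt
  have hsum : ∑ i ∈ s, (f i + 1) ≤ #s * ((c + #s - 1) / #s) := by
    rw [← smul_eq_mul, ← sum_const]
    exact sum_le_sum fun i hi => hlt i hi
  rw [sum_add_distrib, sum_const, smul_eq_mul, mul_one] at hsum
  have hdiv := Nat.div_mul_le_self (c + #s - 1) #s
  have hpos := hs.card_pos
  rw [mul_comm] at hsum
  omega

section Nontrivial

variable {q : ℕ} [Nontrivial (ZMod q)]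

/-- Position of `a` on the edge `{e, e + 1}` of the cycle. -/
def edgeBit (e a : ZMod q) : ZMod 2 := if a = e then 0 else 1

lemma cycDist_edgeBit {e a b : ZMod q} (ha : a = e ∨ a = e + 1) (hb : b = e ∨ b = e + 1) :
    cycDist 2 (edgeBit e a) (edgeBit e b) = cycDist q a b := by
  rcases ha with rfl | rfl <;> rcases hb with rfl | rfl <;> simp [edgeBit, cycDist]

lemma IsEdgeClique.exists_isometry {n : ℕ} {K : Finset (Fin n → ZMod q)}
    (hK : IsEdgeClique q n K) :
    ∃ f : (Fin n → ZMod q) → (Fin n → ZMod 2), Set.InjOn f K ∧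
      ∀ x ∈ K, ∀ y ∈ K, cycDistN (f x) (f y) = cycDistN x y := by
  obtain ⟨e, he⟩ := hK
  have hiso : ∀ x ∈ K, ∀ y ∈ K,
      cycDistN (fun i => edgeBit (e i) (x i)) (fun i => edgeBit (e i) (y i)) = cycDistN x y :=
    fun x hx y hy => sum_congr rfl fun i _ => cycDist_edgeBit (he x hx i) (he y hy i)
  refine ⟨fun x i => edgeBit (e i) (x i), fun x hx y hy hxy => ?_, hiso⟩
  beta_reduce at hxy
  rw [← cycDistN_eq_zero_iff, ← hiso x hx y hy, hxy, cycDistN_eq_zero_iff]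

end Nontrivial

def IsCode {q n : ℕ} (d : ℕ) (C : Finset (Fin n → ZMod q)) : Prop :=
  ∀ x ∈ C, ∀ y ∈ C, x ≠ y → (d : ℕ∞) ≤ cycDistN x y

lemma M_le_of_forall_card_le {q n d b : ℕ}
    (h : ∀ C : Finset (Fin n → ZMod q), IsCode d C → #C ≤ b) : M q n d ≤ b :=
  csSup_le' fun _ ⟨C, hcard, hC⟩ => hcard ▸ h C hC

lemma IsCode.card_le_M {q n d : ℕ} [NeZero q] {C : Finset (Fin n → ZMod q)} (hC : IsCode d C) :
    #C ≤ M q n d :=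
  le_csSup ⟨Fintype.card (Fin n → ZMod q), fun _ ⟨D, hD, _⟩ => hD ▸ D.card_le_univ⟩ ⟨C, rfl, hC⟩

lemma IsCode.image_of_isometry {q q' n d : ℕ} {C : Finset (Fin n → ZMod q)} (hC : IsCode d C)
    (f : (Fin n → ZMod q) → (Fin n → ZMod q'))
    (hf : ∀ x ∈ C, ∀ y ∈ C, cycDistN (f x) (f y) = cycDistN x y) :
    IsCode d (C.image f) := by
  simp only [IsCode, mem_image]
  rintro _ ⟨x, hx, rfl⟩ _ ⟨y, hy, rfl⟩ hxy
  rw [hf x hx y hy]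
  exact hC x hx y hy (ne_of_apply_ne f hxy)

lemma IsCode.mono {q n d : ℕ} {C D : Finset (Fin n → ZMod q)} (hC : IsCode d C) (hD : D ⊆ C) :
    IsCode d D :=
  fun x hx y hy => hC x (hD hx) y (hD hy)

lemma IsEdgeClique.card_inter_le_M_two {q n d : ℕ} [Nontrivial (ZMod q)]
    {K C : Finset (Fin n → ZMod q)} (hK : IsEdgeClique q n K) (hC : IsCode d C) :
    #(C ∩ K) ≤ M 2 n d := by
  obtain ⟨f, hinj, hiso⟩ := hK.exists_isometry
  have hsub : C ∩ K ⊆ K := inter_subset_right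
  rw [← card_image_of_injOn (hinj.mono (coe_subset.2 hsub))]
  exact ((hC.mono inter_subset_left).image_of_isometry f
    fun x hx y hy => hiso x (hsub hx) y (hsub hy)).card_le_M

lemma Finset.card_le_sum_card_inter {α : Type*} [DecidableEq α] {𝒦 : Finset (Finset α)}
    {s : Finset α} (h : ∀ x ∈ s, ∃ K ∈ 𝒦, x ∈ K) : #s ≤ ∑ K ∈ 𝒦, #(s ∩ K) := by
  refine (card_le_card fun x hx => ?_).trans card_biUnion_le
  obtain ⟨K, hK, hxK⟩ := h x hx
  exact mem_biUnion.2 ⟨K, hK, mem_inter.2 ⟨hx, hxK⟩⟩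

theorem stmt2_general (q n d : ℕ) (hq : 3 ≤ q)
    (C : Finset (Fin n → ZMod q))
    (𝒦 : Finset (Finset (Fin n → ZMod q)))
    (hclique : ∀ K ∈ 𝒦, IsEdgeClique q n K)
    (hcover : ∀ x : Fin n → ZMod q, ∃ K ∈ 𝒦, x ∈ K) :
    (∃ K ∈ 𝒦, (C.card + 𝒦.card - 1) / 𝒦.card ≤ (C ∩ K).card) ∧
    (∀ K ∈ 𝒦, ∃ f : (Fin n → ZMod q) → (Fin n → ZMod 2),
      Set.InjOn f K ∧
      ∀ x ∈ K, ∀ y ∈ K, cycDistN (f x) (f y) = cycDistN x y) ∧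
    M q n d ≤ 𝒦.card * M 2 n d := by
  have : Fact (1 < q) := ⟨by omega⟩
  have hcount (D : Finset (Fin n → ZMod q)) : #D ≤ ∑ K ∈ 𝒦, #(D ∩ K) :=
    card_le_sum_card_inter fun x _ => hcover x
  obtain ⟨K₀, hK₀, -⟩ := hcover 0
  refine ⟨exists_ceilDiv_le_of_le_sum ⟨K₀, hK₀⟩ (hcount C),
    fun K hK => (hclique K hK).exists_isometry, M_le_of_forall_card_le fun D hD => ?_⟩
  calc #D ≤ ∑ K ∈ 𝒦, #(D ∩ K) := hcount D
    _ ≤ ∑ _K ∈ 𝒦, M 2 n d := sum_le_sum fun K hK => (hclique K hK).card_inter_le_M_two hD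
    _ = #𝒦 * M 2 n d := by rw [sum_const, smul_eq_mul]

theorem stmt2 (q n d : ℕ) (hq : 3 ≤ q)
    (C : Finset (Fin n → ZMod q))
    (hC : ∀ x ∈ C, ∀ y ∈ C, x ≠ y → (d : ℕ∞) ≤ cycDistN x y)
    (𝒦 : Finset (Finset (Fin n → ZMod q)))
    (h𝒦 : 𝒦.Nonempty)
    (hclique : ∀ K ∈ 𝒦, IsEdgeClique q n K)
    (hcover : ∀ x : Fin n → ZMod q, ∃ K ∈ 𝒦, x ∈ K) :
    (∃ K ∈ 𝒦, (C.card + 𝒦.card - 1) / 𝒦.card ≤ (C ∩ K).card) ∧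
    (∀ K ∈ 𝒦, ∃ f : (Fin n → ZMod q) → (Fin n → ZMod 2),
      Set.InjOn f K ∧
      ∀ x ∈ K, ∀ y ∈ K, cycDistN (f x) (f y) = cycDistN x y) ∧
    M q n d ≤ 𝒦.card * M 2 n d :=
  stmt2_general q n d hq C 𝒦 hclique hcover
end

section
/- For two graphs G and H on the same vertex set, the Schrijver theta function of their edge-intersection graph satisfies θ_S(G ∩ H) ≤ θ_z(G) · θ_S(H), where θ_z is Szegedy's variant. -/
open Matrix

/-- The all-ones matrix. -/
def Jmat (V : Type*) : Matrix V V ℝ := Matrix.of fun _ _ => 1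

/-- Schrijver's theta function: minimize the maximal diagonal entry of a symmetric matrix
`D ⪰ J` whose entries on non-adjacent distinct pairs are ≤ 0. -/
noncomputable def thetaS {V : Type*} [Fintype V] (G : SimpleGraph V) : ℝ :=
  sInf {t | ∃ D : Matrix V V ℝ, D.IsSymm ∧ (D - Jmat V).PosSemidef ∧
    (∀ v w : V, v ≠ w → ¬ G.Adj v w → D v w ≤ 0) ∧ (∀ v : V, D v v ≤ t)}

/-- Szegedy's theta function: minimize the maximal diagonal entry of a symmetric matrix
`D ⪰ J` with all entries nonnegative and vanishing on non-adjacent distinct pairs. -/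
noncomputable def thetaZ {V : Type*} [Fintype V] (G : SimpleGraph V) : ℝ :=
  sInf {t | ∃ D : Matrix V V ℝ, D.IsSymm ∧ (D - Jmat V).PosSemidef ∧
    (∀ v w : V, v ≠ w → ¬ G.Adj v w → D v w = 0) ∧ (∀ v w : V, 0 ≤ D v w) ∧
    (∀ v : V, D v v ≤ t)}

section Aux

variable {V : Type*} [Fintype V]

open Kronecker in
lemma aux_kron_psd {A C : Matrix V V ℝ} (hA : A.PosSemidef) (hC : C.PosSemidef) :
    (A ⊗ₖ C).PosSemidef := by
  exact Matrix.PosSemidef.kronecker hA hC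

open Kronecker in
lemma aux_hadamard_psd {A C : Matrix V V ℝ} (hA : A.PosSemidef) (hC : C.PosSemidef) :
    (A ⊙ C).PosSemidef := by
  have h := (aux_kron_psd hA hC).submatrix (fun v : V => (v, v))
  have : (A ⊗ₖ C).submatrix (fun v : V => (v, v)) (fun v : V => (v, v)) = A ⊙ C := by
    ext v w
    simp [Matrix.submatrix_apply, Matrix.kroneckerMap_apply, Matrix.hadamard_apply]
  rwa [this] at h

lemma aux_J_psd : (Jmat V).PosSemidef := by
  refine Matrix.posSemidef_iff_dotProduct_mulVec.mpr ⟨?_, ?_⟩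
  · ext v w; simp [Jmat, Matrix.conjTranspose_apply]
  · intro x
    have : dotProduct (star x) ((Jmat V) *ᵥ x) = (∑ v, x v) * (∑ v, x v) := by
      simp [dotProduct, Matrix.mulVec, Jmat, Finset.sum_mul]
    rw [this]
    exact mul_self_nonneg _

lemma aux_diag_ge_one {D : Matrix V V ℝ} (hD : (D - Jmat V).PosSemidef) (v : V) :
    1 ≤ D v v := by
  classical
  have h := hD.dotProduct_mulVec_nonneg (Pi.single v 1)
  have : dotProduct (star (Pi.single v (1:ℝ))) ((D - Jmat V) *ᵥ Pi.single v 1)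
      = D v v - 1 := by
    simp [dotProduct, Matrix.mulVec, Pi.single_apply, Finset.mul_sum,
      Jmat, mul_ite, ite_mul, Finset.sum_ite_eq', Matrix.sub_apply]
  rw [this] at h
  linarith

/-- The feasibility set has `card V` as an element. -/
lemma aux_feasible (t : ℝ) (hc : (Fintype.card V : ℝ) ≤ t) (G : SimpleGraph V) :
    ∃ D : Matrix V V ℝ, D.IsSymm ∧ (D - Jmat V).PosSemidef ∧
    (∀ v w : V, v ≠ w → ¬ G.Adj v w → D v w = 0) ∧ (∀ v w : V, 0 ≤ D v w) ∧
    (∀ v : V, D v v ≤ t) := by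
  classical
  refine ⟨(Fintype.card V : ℝ) • (1 : Matrix V V ℝ), ?_, ?_, ?_, ?_, ?_⟩
  · ext v w
    simp [Matrix.one_apply, Matrix.IsSymm, Matrix.transpose_apply, eq_comm]
  · refine Matrix.posSemidef_iff_dotProduct_mulVec.mpr ⟨?_, ?_⟩
    · ext v w
      simp [Matrix.conjTranspose_apply, Matrix.one_apply, Jmat, Matrix.sub_apply]
      by_cases h : v = w <;> simp [h, eq_comm]
    · intro x
      have key : dotProduct (star x) (((Fintype.card V : ℝ) • (1 : Matrix V V ℝ) - Jmat V) *ᵥ x)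
          = (Fintype.card V : ℝ) * (∑ v, x v * x v) - (∑ v, x v) * (∑ v, x v) := by
        simp [dotProduct, Matrix.mulVec, Jmat, Matrix.sub_apply, Matrix.one_apply,
          mul_ite, Finset.mul_sum, Finset.sum_ite_eq', mul_sub, Finset.sum_sub_distrib,
          Finset.sum_mul, mul_comm, mul_left_comm, mul_assoc]
      rw [key]
      have h1 : (∑ v, x v) ^ 2 ≤ (Fintype.card V : ℝ) * (∑ v, x v ^ 2) := by
        have := sq_sum_le_card_mul_sum_sq (s := (Finset.univ : Finset V)) (f := x)
        simpa [Finset.card_univ] using this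
      have h2 : (∑ v, x v * x v) = ∑ v, x v ^ 2 := by simp [pow_two]
      rw [h2]
      nlinarith [h1]
  · intro v w hvw _
    simp [Matrix.one_apply, hvw]
  · intro v w
    by_cases h : v = w <;> simp [Matrix.one_apply, h]
  · intro v
    simpa [Matrix.one_apply] using hc

end Aux

theorem stmt3 {V : Type*} [Fintype V] [Nonempty V] (G H : SimpleGraph V) :
    thetaS (G ⊓ H) ≤ thetaZ G * thetaS H := by
  classical
  set SZ := {t | ∃ D : Matrix V V ℝ, D.IsSymm ∧ (D - Jmat V).PosSemidef ∧
    (∀ v w : V, v ≠ w → ¬ G.Adj v w → D v w = 0) ∧ (∀ v w : V, 0 ≤ D v w) ∧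
    (∀ v : V, D v v ≤ t)} with hSZ
  set SS := {t | ∃ D : Matrix V V ℝ, D.IsSymm ∧ (D - Jmat V).PosSemidef ∧
    (∀ v w : V, v ≠ w → ¬ H.Adj v w → D v w ≤ 0) ∧ (∀ v : V, D v v ≤ t)} with hSS
  set SI := {t | ∃ D : Matrix V V ℝ, D.IsSymm ∧ (D - Jmat V).PosSemidef ∧
    (∀ v w : V, v ≠ w → ¬ (G ⊓ H).Adj v w → D v w ≤ 0) ∧ (∀ v : V, D v v ≤ t)} with hSI
  obtain ⟨v0⟩ := ‹Nonempty V›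
  -- all sets bounded below by 1
  have hbZ : ∀ t ∈ SZ, (1:ℝ) ≤ t := by
    rintro t ⟨D, _, hpsd, _, _, hdiag⟩
    exact le_trans (aux_diag_ge_one hpsd v0) (hdiag v0)
  have hbS : ∀ t ∈ SS, (1:ℝ) ≤ t := by
    rintro t ⟨D, _, hpsd, _, hdiag⟩
    exact le_trans (aux_diag_ge_one hpsd v0) (hdiag v0)
  have hbI : ∀ t ∈ SI, (1:ℝ) ≤ t := by
    rintro t ⟨D, _, hpsd, _, hdiag⟩
    exact le_trans (aux_diag_ge_one hpsd v0) (hdiag v0)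
  have hneZ : SZ.Nonempty := ⟨(Fintype.card V : ℝ), aux_feasible _ le_rfl G⟩
  have hneS : SS.Nonempty := by
    obtain ⟨D, h1, h2, h3, _, h5⟩ := aux_feasible (V := V) _ le_rfl H
    exact ⟨(Fintype.card V : ℝ), D, h1, h2, fun v w hvw h => le_of_eq (h3 v w hvw h), h5⟩
  -- key: product of feasible points is feasible for the intersection
  have key : ∀ t₁ ∈ SZ, ∀ t₂ ∈ SS, thetaS (G ⊓ H) ≤ t₁ * t₂ := by
    rintro t₁ ⟨D₁, hs₁, hp₁, hz₁, hn₁, hd₁⟩ t₂ ⟨D₂, hs₂, hp₂, hz₂, hd₂⟩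
    have hD₂psd : D₂.PosSemidef := by
      have := hp₂.add aux_J_psd
      simpa using this
    have hprod : ((D₁ ⊙ D₂) - Jmat V).PosSemidef := by
      have h2 := (aux_hadamard_psd hp₁ hD₂psd).add hp₂
      have heq : (D₁ - Jmat V) ⊙ D₂ + (D₂ - Jmat V) = (D₁ ⊙ D₂) - Jmat V := by
        ext v w
        simp [Matrix.hadamard_apply, Jmat, Matrix.sub_apply, Matrix.add_apply]
        ring
      rwa [heq] at h2
    have hmem : t₁ * t₂ ∈ SI := by
      refine ⟨D₁ ⊙ D₂, ?_, hprod, ?_, ?_⟩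
      · ext v w
        simp only [Matrix.transpose_apply, Matrix.hadamard_apply]
        rw [← hs₁.apply, ← hs₂.apply]
      · intro v w hvw hadj
        rw [SimpleGraph.inf_adj, not_and_or] at hadj
        rcases hadj with h | h
        · simp [Matrix.hadamard_apply, hz₁ v w hvw h]
        · exact mul_nonpos_of_nonneg_of_nonpos (hn₁ v w) (hz₂ v w hvw h)
      · intro v
        have h1 : 0 ≤ D₁ v v := hn₁ v v
        have h2 : 0 ≤ D₂ v v := le_trans zero_le_one (aux_diag_ge_one hp₂ v)
        have := mul_le_mul (hd₁ v) (hd₂ v) h2 (le_trans h1 (hd₁ v))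
        simpa [Matrix.hadamard_apply] using this
    exact csInf_le ⟨1, hbI⟩ hmem
  -- conclude
  have hEZ : thetaZ G = sInf SZ := rfl
  have hES : thetaS H = sInf SS := rfl
  rw [hEZ, hES]
  have hZpos : (0:ℝ) < sInf SZ := lt_of_lt_of_le zero_lt_one (le_csInf hneZ hbZ)
  have step : ∀ t₂ ∈ SS, thetaS (G ⊓ H) ≤ sInf SZ * t₂ := by
    intro t₂ ht₂
    have ht₂pos : (0:ℝ) < t₂ := lt_of_lt_of_le zero_lt_one (hbS t₂ ht₂)
    have : thetaS (G ⊓ H) / t₂ ≤ sInf SZ :=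
      le_csInf hneZ fun t₁ ht₁ => (div_le_iff₀ ht₂pos).mpr (key t₁ ht₁ t₂ ht₂)
    exact (div_le_iff₀ ht₂pos).mp this
  have : thetaS (G ⊓ H) / sInf SZ ≤ sInf SS :=
    le_csInf hneS fun t₂ ht₂ => (div_le_iff₀' hZpos).mpr (step t₂ ht₂)
  exact (div_le_iff₀' hZpos).mp this
end

section
/- For any graph G and n ≥ 1, θ_z(G^n) ≤ θ_z(G)^n, where G^n is the n-fold strong product. -/
open Matrix

/-- The `n`-fold strong power of a graph: distinct sequences are adjacent iff in every
coordinate the entries are equal or adjacent. -/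
def strongPow {V : Type*} (G : SimpleGraph V) (n : ℕ) : SimpleGraph (Fin n → V) :=
  SimpleGraph.fromRel (fun x y => ∀ i, x i = y i ∨ G.Adj (x i) (y i))

open scoped Kronecker

lemma Jmat_posSemidef (V : Type*) [Fintype V] : (Jmat V).PosSemidef := by
  rw [Matrix.posSemidef_iff_dotProduct_mulVec]
  constructor
  · ext i j
    simp [Jmat, Matrix.conjTranspose_apply]
  · intro x
    have h1 : (Jmat V) *ᵥ x = fun _ => ∑ w, x w := by
      ext v; simp [Jmat, Matrix.mulVec, dotProduct]
    rw [h1]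
    have h2 : star x ⬝ᵥ (fun _ : V => ∑ w, x w) = (∑ w, x w) * (∑ w, x w) := by
      simp [dotProduct, ← Finset.sum_mul]
    rw [h2]
    exact mul_self_nonneg _

lemma posSemidef_kron {m n : Type*} [Fintype m] [Fintype n]
    {A : Matrix m m ℝ} {B : Matrix n n ℝ} (hA : A.PosSemidef) (hB : B.PosSemidef) :
    (A ⊗ₖ B).PosSemidef := by
  classical
  exact hA.kronecker hB

/-- Entrywise tensor power of a matrix. -/
noncomputable def Dpow {V : Type*} [Fintype V] (D : Matrix V V ℝ) (n : ℕ) :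
    Matrix (Fin n → V) (Fin n → V) ℝ :=
  Matrix.of fun x y => ∏ i, D (x i) (y i)

lemma Dpow_sub_J_posSemidef {V : Type*} [Fintype V] {D : Matrix V V ℝ}
    (hD : (D - Jmat V).PosSemidef) (n : ℕ) :
    (Dpow D n - Jmat (Fin n → V)).PosSemidef := by
  induction n with
  | zero =>
      have h : Dpow D 0 - Jmat (Fin 0 → V) = 0 := by
        ext x y; simp [Dpow, Jmat]
      rw [h]
      exact Matrix.PosSemidef.zero
  | succ n ih =>
      have hDn : (Dpow D n).PosSemidef := by
        have h := ih.add (Jmat_posSemidef (Fin n → V))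
        simpa using h
      set e : (Fin (n+1) → V) → V × (Fin n → V) := fun x => (x 0, fun i => x i.succ) with he
      have hM : ((D - Jmat V) ⊗ₖ Dpow D n
          + (Jmat V) ⊗ₖ (Dpow D n - Jmat (Fin n → V))).PosSemidef :=
        (posSemidef_kron hD hDn).add (posSemidef_kron (Jmat_posSemidef V) ih)
      have heq : Dpow D (n+1) - Jmat (Fin (n+1) → V) =
          ((D - Jmat V) ⊗ₖ Dpow D n
            + (Jmat V) ⊗ₖ (Dpow D n - Jmat (Fin n → V))).submatrix e e := by
        ext x y
        simp only [Matrix.sub_apply, Matrix.add_apply, Matrix.submatrix_apply,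
          Matrix.kroneckerMap_apply, Dpow, Jmat, Matrix.of_apply, he,
          Fin.prod_univ_succ]
        ring
      rw [heq]
      exact hM.submatrix e

lemma feas_one_le {W : Type*} [Fintype W] [Nonempty W] {t : ℝ}
    {D : Matrix W W ℝ} (hpsd : (D - Jmat W).PosSemidef)
    (hdiag : ∀ v : W, D v v ≤ t) : 1 ≤ t := by
  classical
  obtain ⟨v⟩ := ‹Nonempty W›
  have hq := hpsd.dotProduct_mulVec_nonneg (Pi.single v 1)
  have hc : star (Pi.single v 1 : W → ℝ) ⬝ᵥ (D - Jmat W) *ᵥ (Pi.single v 1) =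
      D v v - 1 := by
    simp [dotProduct, Matrix.mulVec, Pi.single_apply, Jmat,
      Finset.mul_sum, mul_ite, ite_mul, Finset.sum_ite_eq', Matrix.sub_apply,
      Finset.sum_ite_eq]
  rw [hc] at hq
  linarith [hdiag v]

theorem stmt5 {V : Type*} [Fintype V] (G : SimpleGraph V) (n : ℕ) (hn : 1 ≤ n) :
    thetaZ (strongPow G n) ≤ thetaZ G ^ n := by
  classical
  by_cases hV : Nonempty V
  · -- main case
    set S := {t : ℝ | ∃ D : Matrix V V ℝ, D.IsSymm ∧ (D - Jmat V).PosSemidef ∧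
      (∀ v w : V, v ≠ w → ¬ G.Adj v w → D v w = 0) ∧ (∀ v w : V, 0 ≤ D v w) ∧
      (∀ v : V, D v v ≤ t)} with hS
    haveI : Nonempty (Fin n → V) := ⟨fun _ => Classical.arbitrary V⟩
    have hmem_le : ∀ t ∈ S, (1:ℝ) ≤ t := by
      rintro t ⟨D, _, h2, _, _, h5⟩
      exact feas_one_le h2 h5
    have hbdd : BddBelow S := ⟨1, hmem_le⟩
    -- nonemptiness of S : take D = card V • 1
    have hSne : S.Nonempty := by
      refine ⟨(Fintype.card V : ℝ),
        (Fintype.card V : ℝ) • (1 : Matrix V V ℝ), ?_, ?_, ?_, ?_, ?_⟩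
      · ext i j
        simp [Matrix.transpose_apply, Matrix.one_apply, eq_comm]
      · rw [Matrix.posSemidef_iff_dotProduct_mulVec]
        constructor
        · ext i j
          simp [Matrix.conjTranspose_apply, Matrix.one_apply, Jmat, eq_comm]
        · intro x
          set c : ℝ := (Fintype.card V : ℝ) with hc
          have h1 : ∀ v, ((c • (1 : Matrix V V ℝ) - Jmat V) *ᵥ x) v
              = c * x v - ∑ w, x w := by
            intro v
            simp [Matrix.mulVec, dotProduct, Matrix.sub_apply, Jmat,
              Matrix.smul_apply, Matrix.one_apply]
            have hw : ∀ w, ((if v = w then c else 0) - 1) * x w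
                = (if v = w then c * x w else 0) - x w := by
              intro w; by_cases h : v = w <;> simp [h] <;> ring
            rw [Finset.sum_congr rfl fun w _ => hw w, Finset.sum_sub_distrib,
              Finset.sum_ite_eq]
            simp
          have h2 : star x ⬝ᵥ ((c • (1 : Matrix V V ℝ) - Jmat V) *ᵥ x)
              = ∑ v, x v * (c * x v - ∑ w, x w) := by
            simp only [dotProduct, star_trivial, Pi.star_apply]
            exact Finset.sum_congr rfl fun v _ => by rw [h1 v]
          have h3 : ∑ v, x v * (c * x v - ∑ w, x w)
              = c * (∑ v, x v ^ 2) - (∑ v, x v) ^ 2 := by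
            rw [Finset.sum_congr rfl (fun v _ => (by ring :
              x v * (c * x v - ∑ w, x w) = c * x v ^ 2 - x v * ∑ w, x w)),
              Finset.sum_sub_distrib, ← Finset.mul_sum, ← Finset.sum_mul, sq]
          have h4 := sq_sum_le_card_mul_sum_sq (s := (Finset.univ : Finset V)) (f := x)
          simp only [Finset.card_univ] at h4
          rw [h2, h3]
          linarith
      · intro v w hvw _
        simp [Matrix.smul_apply, Matrix.one_apply, hvw]
      · intro v w
        by_cases hvw : v = w <;> simp [Matrix.smul_apply, Matrix.one_apply, hvw]
      · intro v
        simp [Matrix.smul_apply, Matrix.one_apply]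
    -- key step : each feasible t for G gives feasible t^n for strongPow G n
    have hbddn : BddBelow {t : ℝ | ∃ D : Matrix (Fin n → V) (Fin n → V) ℝ,
        D.IsSymm ∧ (D - Jmat (Fin n → V)).PosSemidef ∧
        (∀ v w, v ≠ w → ¬ (strongPow G n).Adj v w → D v w = 0) ∧
        (∀ v w, 0 ≤ D v w) ∧ (∀ v, D v v ≤ t)} := by
      refine ⟨1, ?_⟩
      rintro t ⟨D, _, h2, _, _, h5⟩
      exact feas_one_le h2 h5
    have key : ∀ t ∈ S, thetaZ (strongPow G n) ≤ t ^ n := by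
      intro t ht
      obtain ⟨D, hsymm, hpsd, hzero, hnn, hdiag⟩ := ht
      refine csInf_le hbddn ?_
      refine ⟨Dpow D n, ?_, Dpow_sub_J_posSemidef hpsd n, ?_, ?_, ?_⟩
      · ext x y
        simp only [Matrix.transpose_apply, Dpow, Matrix.of_apply]
        exact Finset.prod_congr rfl fun i _ => hsymm.apply (x i) (y i)
      · intro x y hxy hadj
        have hrel : ¬ ∀ i, x i = y i ∨ G.Adj (x i) (y i) := by
          intro hall
          exact hadj (by
            simp only [strongPow, SimpleGraph.fromRel_adj]
            exact ⟨hxy, Or.inl hall⟩)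
        push_neg at hrel
        obtain ⟨i, hi1, hi2⟩ := hrel
        simp only [Dpow, Matrix.of_apply]
        exact Finset.prod_eq_zero (Finset.mem_univ i) (hzero _ _ hi1 hi2)
      · intro x y
        simp only [Dpow, Matrix.of_apply]
        exact Finset.prod_nonneg fun i _ => hnn _ _
      · intro x
        simp only [Dpow, Matrix.of_apply]
        calc (∏ i, D (x i) (x i)) ≤ ∏ _i : Fin n, t :=
              Finset.prod_le_prod (fun i _ => hnn _ _) (fun i _ => hdiag _)
          _ = t ^ n := by simp
    -- limit argument
    have key2 : ∀ ε : ℝ, ε ∈ Set.Ioi (0:ℝ) →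
        thetaZ (strongPow G n) ≤ (thetaZ G + ε) ^ n := by
      intro ε hε
      obtain ⟨t, htS, htlt⟩ := Real.lt_sInf_add_pos hSne hε
      have ht0 : (0:ℝ) ≤ t := le_trans zero_le_one (hmem_le t htS)
      calc thetaZ (strongPow G n) ≤ t ^ n := key t htS
        _ ≤ (thetaZ G + ε) ^ n := pow_le_pow_left₀ ht0 htlt.le n
    have htend : Filter.Tendsto (fun ε : ℝ => (thetaZ G + ε) ^ n)
        (nhdsWithin 0 (Set.Ioi 0)) (nhds ((thetaZ G) ^ n)) := by
      have hc : Continuous (fun ε : ℝ => (thetaZ G + ε) ^ n) :=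
        (continuous_const.add continuous_id).pow n
      have h := hc.tendsto 0
      simp only [add_zero] at h
      exact h.mono_left nhdsWithin_le_nhds
    exact ge_of_tendsto htend (eventually_mem_nhdsWithin.mono key2)
  · -- V empty
    haveI : IsEmpty V := not_nonempty_iff.mp hV
    haveI : IsEmpty (Fin n → V) := ⟨fun f => IsEmpty.false (f ⟨0, hn⟩)⟩
    have hempty : ∀ (W : Type _) [Fintype W] [IsEmpty W] (G' : SimpleGraph W),
        thetaZ G' = 0 := by
      intro W _ _ G'
      have hset : {t : ℝ | ∃ D : Matrix W W ℝ, D.IsSymm ∧ (D - Jmat W).PosSemidef ∧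
          (∀ v w : W, v ≠ w → ¬ G'.Adj v w → D v w = 0) ∧ (∀ v w : W, 0 ≤ D v w) ∧
          (∀ v : W, D v v ≤ t)} = Set.univ := by
        ext t
        simp only [Set.mem_setOf_eq, Set.mem_univ, iff_true]
        refine ⟨0, ?_, Matrix.posSemidef_iff_dotProduct_mulVec.mpr ⟨?_, ?_⟩, ?_, ?_, ?_⟩
        · ext i j; exact isEmptyElim i
        · ext i j; exact isEmptyElim i
        · intro x
          simp [dotProduct]
        · intro v; exact isEmptyElim v
        · intro v; exact isEmptyElim v
        · intro v; exact isEmptyElim v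
      rw [thetaZ, hset]
      refine Real.sInf_of_not_bddBelow ?_
      rintro ⟨b, hb⟩
      have h1 := hb (Set.mem_univ (b - 1))
      linarith
    rw [hempty _ (strongPow G n), hempty _ G]
    rw [zero_pow (by omega : n ≠ 0)]
end

section
/- Let C ⊆ (Z/qZ)^n be a code with minimum distance at least d (under a translation-invariant semimetric), and let f : (Z/qZ)^n → ℝ satisfy: f(x) ≤ 0 whenever d(x,0) ≥ d and x ≠ 0; the Fourier transform f̂(ω) = Σ_x f(x) e^{2πi⟨ω,x⟩/q} is nonnegative for all ω; and f̂(0) > 0. Then |C| ≤ q^n · f(0)/f̂(0). -/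
/-
Put `S(ω) = Σ_{c ∈ C} e^{2πi⟨ω,c⟩/q}`, the Fourier transform of the indicator of `C`.
Orthogonality of characters gives `Σ_ω f̂(ω) |S(ω)|² = qⁿ Σ_{c, c' ∈ C} f(c - c')`. All terms on
the left are nonnegative and the `ω = 0` term is `f̂(0) |C|²`; on the right only the diagonal terms
`c = c'` can be positive, since all other differences have weight at least `d`, so the right side
is at most `qⁿ |C| f(0)`.
-/

open Finset

/-- Fourier transform on `(ZMod q)^n`: `f̂(ω) = Σ_x f(x) e^{2πi⟨ω,x⟩/q}`. -/
noncomputable def ft {q n : ℕ} [NeZero q] (f : (Fin n → ZMod q) → ℝ) (ω : Fin n → ZMod q) : ℂ :=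
  ∑ x : Fin n → ZMod q, (f x : ℂ) *
    Complex.exp (2 * Real.pi * Complex.I * (((∑ i, ω i * x i : ZMod q)).val : ℂ) / q)

open Matrix ComplexConjugate

lemma AddChar.map_sum_eq_prod {A M ι : Type*} [AddCommMonoid A] [CommMonoid M] (ψ : AddChar A M)
    (s : Finset ι) (g : ι → A) : ψ (∑ i ∈ s, g i) = ∏ i ∈ s, ψ (g i) :=
  map_prod ψ.toMonoidHom (fun i ↦ Multiplicative.ofAdd (g i)) s

lemma sum_sum_sub_le_card_mul {G : Type*} [AddGroup G] (C : Finset G) (f : G → ℝ)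
    (hf : ∀ c ∈ C, ∀ c' ∈ C, c ≠ c' → f (c - c') ≤ 0) :
    ∑ c ∈ C, ∑ c' ∈ C, f (c - c') ≤ #C * f 0 := by
  classical
  have hrow : ∀ c ∈ C, ∑ c' ∈ C, f (c - c') ≤ f 0 := fun c hc ↦ by
    rw [← add_sum_erase C _ hc, sub_self, add_le_iff_nonpos_right]
    exact sum_nonpos fun c' hc' ↦
      hf c hc c' (mem_of_mem_erase hc') (ne_of_mem_erase hc').symm
  simpa only [sum_const, nsmul_eq_mul] using sum_le_sum hrow

section
variable {q n : ℕ} [NeZero q]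

local notation "ψ" => (ZMod.stdAddChar : AddChar (ZMod q) ℂ)

lemma ft_eq_sum_stdAddChar (f : (Fin n → ZMod q) → ℝ) (ω : Fin n → ZMod q) :
    ft f ω = ∑ x, (f x : ℂ) * ψ (ω ⬝ᵥ x) := by
  simp only [ft, ZMod.stdAddChar_apply, ZMod.toCircle_apply]
  rfl

lemma sum_stdAddChar_dotProduct (z : Fin n → ZMod q) :
    ∑ ω : Fin n → ZMod q, ψ (ω ⬝ᵥ z) = if z = 0 then (q : ℂ) ^ n else 0 := by
  classical
  calc ∑ ω : Fin n → ZMod q, ψ (ω ⬝ᵥ z)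
      = ∏ i, ∑ t : ZMod q, ψ (t * z i) := by
        simp only [dotProduct, AddChar.map_sum_eq_prod, Fintype.prod_sum]
    _ = ∏ i, if z i = 0 then (q : ℂ) else 0 := by
        simp only [AddChar.sum_mulShift _ (ZMod.isPrimitive_stdAddChar q), ZMod.card, Nat.cast_ite,
          Nat.cast_zero]
    _ = if z = 0 then (q : ℂ) ^ n else 0 := by
        simp only [Fintype.prod_ite_zero, prod_const, card_univ, Fintype.card_fin, funext_iff,
          Pi.zero_apply]

lemma sum_ft_mul_stdAddChar (f : (Fin n → ZMod q) → ℝ) (y : Fin n → ZMod q) :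
    ∑ ω, ft f ω * ψ (ω ⬝ᵥ y) = (q : ℂ) ^ n * f (-y) := by
  classical
  calc ∑ ω, ft f ω * ψ (ω ⬝ᵥ y)
      = ∑ x, (f x : ℂ) * ∑ ω : Fin n → ZMod q, ψ (ω ⬝ᵥ (x + y)) := by
        simp only [ft_eq_sum_stdAddChar, sum_mul, mul_sum, dotProduct_add, AddChar.map_add_eq_mul,
          mul_assoc]
        exact sum_comm
    _ = q ^ n * f (-y) := by
        simp only [sum_stdAddChar_dotProduct, add_eq_zero_iff_eq_neg, mul_ite, mul_zero,
          sum_ite_eq', mem_univ, if_true]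
        ring

lemma ft_indicator_one (C : Finset (Fin n → ZMod q)) (ω : Fin n → ZMod q) :
    ft ((C : Set (Fin n → ZMod q)).indicator 1) ω = ∑ c ∈ C, ψ (ω ⬝ᵥ c) := by
  classical
  simp [ft_eq_sum_stdAddChar, Set.indicator_apply, apply_ite ((↑) : ℝ → ℂ), ite_mul, sum_ite_mem]

lemma sum_re_ft_mul_normSq_ft_indicator (f : (Fin n → ZMod q) → ℝ) (C : Finset (Fin n → ZMod q)) :
    ∑ ω, (ft f ω).re * Complex.normSq (ft ((C : Set (Fin n → ZMod q)).indicator 1) ω) =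
      (q : ℝ) ^ n * ∑ c ∈ C, ∑ c' ∈ C, f (c - c') := by
  have h : ∑ ω, ft f ω * Complex.normSq (ft ((C : Set (Fin n → ZMod q)).indicator 1) ω) =
      (q : ℂ) ^ n * ∑ c ∈ C, ∑ c' ∈ C, (f (c - c') : ℂ) := by
    have hψ : ∀ ω c c' : Fin n → ZMod q,
        ψ (ω ⬝ᵥ (c' - c)) = conj (ψ (ω ⬝ᵥ c)) * ψ (ω ⬝ᵥ c') := fun ω c c' ↦ by
      rw [dotProduct_sub, sub_eq_neg_add, AddChar.map_add_eq_mul, AddChar.map_neg_eq_conj]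
    calc _ = ∑ ω, ∑ c ∈ C, ∑ c' ∈ C, ft f ω * ψ (ω ⬝ᵥ (c' - c)) := by
          simp only [Complex.normSq_eq_conj_mul_self, ft_indicator_one, map_sum, sum_mul_sum, hψ,
            ← mul_sum]
      _ = ∑ c ∈ C, ∑ c' ∈ C, ∑ ω, ft f ω * ψ (ω ⬝ᵥ (c' - c)) := by
          rw [sum_comm]
          exact sum_congr rfl fun _ _ ↦ sum_comm
      _ = _ := by simp only [sum_ft_mul_stdAddChar, neg_sub, mul_sum]
  simpa only [Complex.re_sum, Complex.re_mul_ofReal, Complex.re_ofReal_mul, ← Complex.ofReal_sum,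
    ← Complex.ofReal_natCast, ← Complex.ofReal_pow, Complex.ofReal_re] using congrArg Complex.re h

lemma re_ft_zero_mul_card_sq_le (f : (Fin n → ZMod q) → ℝ) (hft : ∀ ω, 0 ≤ (ft f ω).re)
    (C : Finset (Fin n → ZMod q)) (hC : ∀ c ∈ C, ∀ c' ∈ C, c ≠ c' → f (c - c') ≤ 0) :
    (ft f 0).re * #C ^ 2 ≤ (q : ℝ) ^ n * (#C * f 0) := by
  set S := ft ((C : Set (Fin n → ZMod q)).indicator 1)
  have hS0 : Complex.normSq (S 0) = #C ^ 2 := by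
    simp [S, ft_indicator_one, Complex.normSq_natCast, sq]
  calc (ft f 0).re * #C ^ 2 = (ft f 0).re * Complex.normSq (S 0) := by rw [hS0]
    _ ≤ ∑ ω, (ft f ω).re * Complex.normSq (S ω) :=
        single_le_sum (fun ω _ ↦ mul_nonneg (hft ω) (Complex.normSq_nonneg _)) (mem_univ 0)
    _ = q ^ n * ∑ c ∈ C, ∑ c' ∈ C, f (c - c') := sum_re_ft_mul_normSq_ft_indicator f C
    _ ≤ q ^ n * (#C * f 0) := by gcongr; exact sum_sum_sub_le_card_mul C f hC

end

theorem stmt7_general (q n d : ℕ) [NeZero q]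
    (w : (Fin n → ZMod q) → ℕ∞)
    (f : (Fin n → ZMod q) → ℝ)
    (hf : ∀ x, x ≠ 0 → (d : ℕ∞) ≤ w x → f x ≤ 0)
    (hft : ∀ ω, (ft f ω).im = 0 ∧ 0 ≤ (ft f ω).re)
    (hft0 : 0 < (ft f 0).re)
    (C : Finset (Fin n → ZMod q)) (hCne : C.Nonempty)
    (hC : ∀ x ∈ C, ∀ y ∈ C, x ≠ y → (d : ℕ∞) ≤ w (x - y)) :
    (C.card : ℝ) ≤ (q : ℝ) ^ n * f 0 / (ft f 0).re := by
  have hcode : ∀ c ∈ C, ∀ c' ∈ C, c ≠ c' → f (c - c') ≤ 0 := fun c hc c' hc' hne ↦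
    hf _ (sub_ne_zero.mpr hne) (hC c hc c' hc' hne)
  have hbound := re_ft_zero_mul_card_sq_le f (fun ω ↦ (hft ω).2) C hcode
  have hcard : (0 : ℝ) < #C := by exact_mod_cast hCne.card_pos
  rw [le_div_iff₀ hft0]
  exact le_of_mul_le_mul_right (by linarith) hcard

theorem stmt7 (q n d : ℕ) [NeZero q]
    (w : (Fin n → ZMod q) → ℕ∞) (hw : ∀ x, w x = 0 ↔ x = 0)
    (f : (Fin n → ZMod q) → ℝ)
    (hf : ∀ x, x ≠ 0 → (d : ℕ∞) ≤ w x → f x ≤ 0)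
    (hft : ∀ ω, (ft f ω).im = 0 ∧ 0 ≤ (ft f ω).re)
    (hft0 : 0 < (ft f 0).re)
    (C : Finset (Fin n → ZMod q)) (hCne : C.Nonempty)
    (hC : ∀ x ∈ C, ∀ y ∈ C, x ≠ y → (d : ℕ∞) ≤ w (x - y)) :
    (C.card : ℝ) ≤ (q : ℝ) ^ n * f 0 / (ft f 0).re :=
  stmt7_general q n d w f hf hft hft0 C hCne hC
end

section
/- Let g₁ : Z/qZ → ℝ (q odd, q ≥ 3) be defined by g₁(0) = 1, g₁(±1) = φ with φ = 1/(2cos(π/q)), and g₁(x) = 0 otherwise. Then its Fourier transform ĝ₁(ω) = 1 + 2φ cos(2πω/q) is nonnegative for all ω ∈ Z/qZ, and ĝ₁(ω) = 0 exactly when ω = ±(q−1)/2 mod q. -/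
open Finset Real

-- auxiliary: the case 2v ≤ q-1
lemma stmt8_aux1 (q v : ℕ) (hq3 : 3 ≤ q) (h2v : 2 * v ≤ q - 1) :
    Real.cos (π - π / q) ≤ Real.cos (2 * π * v / q) ∧
    (Real.cos (2 * π * v / q) = Real.cos (π - π / q) ↔ 2 * v = q - 1) := by
  have hqR : (0:ℝ) < q := by exact_mod_cast Nat.lt_of_lt_of_le (by norm_num) hq3
  have h2vR : (2 * v : ℝ) ≤ (q:ℝ) - 1 := by
    have : ((2*v : ℕ) : ℝ) ≤ ((q - 1 : ℕ) : ℝ) := by exact_mod_cast h2v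
    push_cast [Nat.cast_sub (by omega : 1 ≤ q)] at this
    linarith
  have hα : π - π / q = π * ((q:ℝ) - 1) / q := by field_simp
  have hθ0 : 0 ≤ 2 * π * (v:ℝ) / q := by positivity
  have hθα : 2 * π * (v:ℝ) / q ≤ π - π / q := by
    rw [hα, div_le_div_iff₀ hqR hqR]
    nlinarith [mul_nonneg (mul_nonneg Real.pi_pos.le hqR.le) (by linarith : (0:ℝ) ≤ (q:ℝ) - 1 - 2 * v)]
  have hαπ : π - π / q ≤ π := by
    have : 0 ≤ π / q := by positivity
    linarith
  have hα0 : 0 ≤ π - π / q := le_trans hθ0 hθα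
  constructor
  · exact Real.cos_le_cos_of_nonneg_of_le_pi hθ0 hαπ hθα
  · constructor
    · intro h
      have := Real.strictAntiOn_cos.injOn ⟨hθ0, le_trans hθα hαπ⟩ ⟨hα0, hαπ⟩ h
      rw [hα] at this
      have hv : (2 * v : ℝ) = (q:ℝ) - 1 := by
        have hπ : (0:ℝ) < π := Real.pi_pos
        field_simp at this
        nlinarith
      have : ((2*v : ℕ) : ℝ) = ((q - 1 : ℕ) : ℝ) := by
        push_cast [Nat.cast_sub (by omega : 1 ≤ q)]
        linarith
      exact_mod_cast this
    · intro h
      have hv : (2 * v : ℝ) = (q:ℝ) - 1 := by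
        have : ((2*v : ℕ) : ℝ) = ((q - 1 : ℕ) : ℝ) := by exact_mod_cast h
        push_cast [Nat.cast_sub (by omega : 1 ≤ q)] at this
        linarith
      have h3 : 2 * π * (v:ℝ) / q = π * ((q:ℝ) - 1) / q := by rw [← hv]; ring
      rw [h3, ← hα]

lemma stmt8_aux (q v : ℕ) (hq3 : 3 ≤ q) (hodd : Odd q) (hv : v < q) :
    Real.cos (π - π / q) ≤ Real.cos (2 * π * v / q) ∧
    (Real.cos (2 * π * v / q) = Real.cos (π - π / q) ↔ 2 * v = q - 1 ∨ 2 * v = q + 1) := by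
  obtain ⟨k, hk⟩ := hodd
  have hqR : (0:ℝ) < q := by exact_mod_cast Nat.lt_of_lt_of_le (by norm_num) hq3
  rcases le_or_gt (2 * v) (q - 1) with h | h
  · obtain ⟨h1, h2⟩ := stmt8_aux1 q v hq3 h
    refine ⟨h1, ?_⟩
    rw [h2]
    omega
  · -- 2v ≥ q+1, use w = q - v
    set w := q - v with hw
    have hww : 2 * w ≤ q - 1 := by omega
    have hvw : v = q - w := by omega
    have hcos : Real.cos (2 * π * v / q) = Real.cos (2 * π * w / q) := by
      have hvR : (v : ℝ) = (q:ℝ) - w := by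
        rw [hvw]
        push_cast [Nat.cast_sub (by omega : w ≤ q)]
        ring
      rw [hvR]
      have : 2 * π * ((q:ℝ) - w) / q = 2 * π - 2 * π * (w:ℝ) / q := by
        field_simp
      rw [this, Real.cos_two_pi_sub]
    obtain ⟨h1, h2⟩ := stmt8_aux1 q w hq3 hww
    rw [hcos]
    refine ⟨h1, ?_⟩
    rw [h2]
    omega

theorem stmt8 (q : ℕ) [NeZero q] (hodd : Odd q) (hq3 : 3 ≤ q) :
    let φ : ℝ := 1 / (2 * Real.cos (π / q))
    let g₁ : ZMod q → ℝ := fun x => if x = 0 then 1 else if x = 1 ∨ x = -1 then φ else 0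
    let F : ZMod q → ℝ := fun ω => 1 + 2 * φ * Real.cos (2 * π * (ω.val : ℝ) / q)
    (∀ ω : ZMod q,
        (∑ x : ZMod q, (g₁ x : ℂ) *
          Complex.exp (2 * π * Complex.I * (((ω * x : ZMod q)).val : ℂ) / q)) = (F ω : ℂ)) ∧
    (∀ ω : ZMod q, 0 ≤ F ω) ∧
    (∀ ω : ZMod q, F ω = 0 ↔ ω = (((q - 1) / 2 : ℕ) : ZMod q) ∨
        ω = -(((q - 1) / 2 : ℕ) : ZMod q)) := by
  intro φ g₁ F
  obtain ⟨k, hk⟩ := id hodd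
  haveI : Fact (1 < q) := ⟨by omega⟩
  have hqR : (0:ℝ) < q := by exact_mod_cast Nat.lt_of_lt_of_le (by norm_num) hq3
  have hqC : (q:ℂ) ≠ 0 := by exact_mod_cast (by positivity : (0:ℝ) < q).ne'
  have hπ2 : π / q < π / 2 := by
    apply div_lt_div_of_pos_left Real.pi_pos (by norm_num)
    exact_mod_cast by omega
  have hπq0 : 0 < π / q := by positivity
  have hcosq : 0 < Real.cos (π / q) :=
    Real.cos_pos_of_mem_Ioo ⟨by linarith [Real.pi_pos], hπ2⟩
  have hF : ∀ ω : ZMod q, F ω =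
      (Real.cos (π / q) + Real.cos (2 * π * (ω.val : ℝ) / q)) / Real.cos (π / q) := by
    intro ω
    simp only [F, φ]
    field_simp
  -- distinctness of 0, 1, -1
  have h2ne : (2 : ZMod q) ≠ 0 := by
    intro h
    have : ((2:ℕ) : ZMod q) = 0 := by exact_mod_cast h
    rw [ZMod.natCast_eq_zero_iff] at this
    have := Nat.le_of_dvd (by norm_num) this
    omega
  have h10 : (1 : ZMod q) ≠ 0 := one_ne_zero
  have hm10 : (-1 : ZMod q) ≠ 0 := by simp
  have h1m1 : (1 : ZMod q) ≠ -1 := by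
    intro h
    exact h2ne (by linear_combination h)
  -- the exponential pair sum
  have hpair : ∀ ω : ZMod q,
      Complex.exp (2 * π * Complex.I * ((ω.val : ℕ) : ℂ) / q) +
      Complex.exp (2 * π * Complex.I * (((-ω : ZMod q).val : ℕ) : ℂ) / q) =
      2 * (Real.cos (2 * π * (ω.val : ℝ) / q) : ℂ) := by
    intro ω
    have key : ∀ t : ℝ, Complex.exp ((t:ℂ) * Complex.I) + Complex.exp ((-t : ℝ) * Complex.I)
        = 2 * (Real.cos t : ℂ) := by
      intro t
      rw [Complex.exp_mul_I, Complex.exp_mul_I]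
      push_cast
      rw [Complex.cos_neg, Complex.sin_neg]
      ring
    by_cases hω : ω = 0
    · subst hω
      simp [Complex.exp_zero]
      norm_num
    · set t : ℝ := 2 * π * (ω.val : ℝ) / q with ht
      have hA : 2 * (π:ℂ) * Complex.I * ((ω.val : ℕ) : ℂ) / q = (t:ℂ) * Complex.I := by
        rw [ht]
        push_cast
        field_simp
      have hvneg : ((-ω : ZMod q).val : ℂ) = (q:ℂ) - (ω.val : ℂ) := by
        rw [ZMod.neg_val, if_neg hω]
        push_cast [Nat.cast_sub (le_of_lt (ZMod.val_lt ω))]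
        ring
      have hB : 2 * (π:ℂ) * Complex.I * (((-ω : ZMod q).val : ℕ) : ℂ) / q
          = 2 * π * Complex.I + ((-t : ℝ) : ℂ) * Complex.I := by
        rw [hvneg, ht]
        push_cast
        field_simp
        ring
      rw [hA, hB, Complex.exp_add, Complex.exp_two_pi_mul_I, one_mul]
      exact key t
  refine ⟨?_, ?_, ?_⟩
  · -- Fourier sum
    intro ω
    have hzero : ∀ x ∈ (Finset.univ : Finset (ZMod q)), x ∉ ({0, 1, -1} : Finset (ZMod q)) →
        (g₁ x : ℂ) * Complex.exp (2 * π * Complex.I * (((ω * x : ZMod q)).val : ℂ) / q) = 0 := by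
      intro x _ hx
      simp only [Finset.mem_insert, Finset.mem_singleton, not_or] at hx
      simp [g₁, hx.1, hx.2.1, hx.2.2]
    rw [← Finset.sum_subset (Finset.subset_univ ({0, 1, -1} : Finset (ZMod q))) hzero]
    rw [show ({0, 1, -1} : Finset (ZMod q)) = insert 0 (insert 1 {-1}) from rfl]
    rw [Finset.sum_insert (by simp [h10.symm, hm10.symm]), Finset.sum_insert (by simp [h1m1]),
      Finset.sum_singleton]
    simp only [g₁, if_pos rfl, if_neg h10, if_neg hm10, eq_self_iff_true, true_or, or_true,
      if_true, mul_zero, mul_one, mul_neg_one]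
    rw [show (((0 : ZMod q)).val : ℂ) = 0 by simp, mul_zero, zero_div, Complex.exp_zero,
      mul_one, Complex.ofReal_one]
    have e := hpair ω
    simp only [F]
    push_cast at e ⊢
    linear_combination (φ : ℂ) * e
  · -- nonnegativity
    intro ω
    rw [hF ω]
    apply div_nonneg _ hcosq.le
    have h1 := (stmt8_aux q ω.val hq3 hodd (ZMod.val_lt ω)).1
    rw [Real.cos_pi_sub] at h1
    linarith
  · -- zero characterization
    intro ω
    set m := (q - 1) / 2 with hm
    have hmq : m < q := by omega
    have hcval : (((q-1)/2 : ℕ) : ZMod q).val = m := ZMod.val_cast_of_lt hmq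
    have hc0 : (((q-1)/2 : ℕ) : ZMod q) ≠ 0 := by
      intro h
      have := hcval
      rw [h, ZMod.val_zero] at this
      omega
    have hcneg : ((-(((q-1)/2 : ℕ) : ZMod q)).val) = m + 1 := by
      rw [ZMod.neg_val, if_neg hc0, hcval]
      omega
    have heq1 : ω = (((q - 1) / 2 : ℕ) : ZMod q) ↔ ω.val = m := by
      constructor
      · rintro rfl; exact hcval
      · intro h; exact ZMod.val_injective q (by rw [h, hcval])
    have heq2 : ω = -(((q - 1) / 2 : ℕ) : ZMod q) ↔ ω.val = m + 1 := by
      constructor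
      · rintro rfl; exact hcneg
      · intro h; exact ZMod.val_injective q (by rw [h, hcneg])
    rw [hF ω, div_eq_zero_iff, or_iff_left hcosq.ne']
    have haux := (stmt8_aux q ω.val hq3 hodd (ZMod.val_lt ω)).2
    rw [Real.cos_pi_sub] at haux
    rw [heq1, heq2]
    constructor
    · intro h
      have : Real.cos (2 * π * (ω.val : ℝ) / q) = -Real.cos (π / q) := by linarith
      have := haux.mp this
      omega
    · intro h
      have : 2 * ω.val = q - 1 ∨ 2 * ω.val = q + 1 := by omega
      have := haux.mpr this
      linarith
end

section
/- Let C ⊆ Γ be a subgroup of an abelian group Γ with weight function w (w(x) = 0 iff x = 0), inducing translation-invariant semimetric d(x,y) = w(x−y), and let w' be the factor weight on Γ/C given by w'(γ + C) = min over the coset of w. If C' is a set of coset representatives for a code in (Γ/C, w'), then the union of cosets C' + C is a code in Γ whose minimum distance equals min{ d_min(C), d_min(C') }, where d_min(C) = min_{0 ≠ c ∈ C} w(c) and d_min(C') is the minimum factor-weight distance between distinct cosets in C'. -/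
open Pointwise

/-!
Write two points of `C' + C` as `x + c₁` and `y + c₂`; their difference is `(x - y) + (c₁ - c₂)`.
If `x = y` it is a nonzero element of `C`; otherwise `x - y ∉ C` and its weight is bounded below by
the factor weight of the coset `x - y + C`. Conversely, every nonzero `c ∈ C` is realised as
`(x₀ + c) - x₀`, and every translate `x - y + c` of a coset difference as `(x + c) - y`.
-/

section CosetCode

variable {Γ : Type*} [AddCommGroup Γ] (w : Γ → ℕ∞)

noncomputable def minDist (S : Set Γ) : ℕ∞ :=
  sInf {v : ℕ∞ | ∃ s ∈ S, ∃ t ∈ S, s ≠ t ∧ v = w (s - t)}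

noncomputable def minWeight (C : AddSubgroup Γ) : ℕ∞ :=
  sInf {v : ℕ∞ | ∃ c ∈ C, c ≠ (0 : Γ) ∧ v = w c}

noncomputable def factorWeight (C : AddSubgroup Γ) (γ : Γ) : ℕ∞ :=
  ⨅ c ∈ C, w (γ + c)

noncomputable def factorDist (C : AddSubgroup Γ) (C' : Set Γ) : ℕ∞ :=
  sInf {v : ℕ∞ | ∃ x ∈ C', ∃ y ∈ C', x - y ∉ C ∧ v = factorWeight w C (x - y)}

variable {w} {C : AddSubgroup Γ} {C' : Set Γ}

theorem minDist_le {S : Set Γ} {s t : Γ} (hs : s ∈ S) (ht : t ∈ S) (hst : s ≠ t) :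
    minDist w S ≤ w (s - t) :=
  sInf_le ⟨s, hs, t, ht, hst, rfl⟩

theorem minDist_add_addSubgroup_le_minWeight (hC' : C'.Nonempty) :
    minDist w (C' + (C : Set Γ)) ≤ minWeight w C := by
  refine le_sInf ?_
  rintro _ ⟨c, hc, hc0, rfl⟩
  obtain ⟨x₀, hx₀⟩ := hC'
  simpa using minDist_le (w := w) (Set.add_mem_add hx₀ hc)
    (Set.add_mem_add hx₀ C.zero_mem) (by simpa using hc0)

theorem minDist_add_addSubgroup_le_factorDist :
    minDist w (C' + (C : Set Γ)) ≤ factorDist w C C' := by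
  refine le_sInf ?_
  rintro _ ⟨x, hx, y, hy, hxy, rfl⟩
  refine le_iInf₂ fun c hc => ?_
  have hne : x + c ≠ y + 0 := fun h => by
    have hxy' : x - y = -c := by rw [add_zero] at h; rw [← h]; abel
    exact hxy (hxy' ▸ C.neg_mem hc)
  simpa [add_sub_right_comm] using
    minDist_le (w := w) (Set.add_mem_add hx hc) (Set.add_mem_add hy C.zero_mem) hne

theorem min_minWeight_factorDist_le_minDist
    (hrep : ∀ x ∈ C', ∀ y ∈ C', x - y ∈ C → x = y) :
    min (minWeight w C) (factorDist w C C') ≤ minDist w (C' + (C : Set Γ)) := by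
  refine le_sInf ?_
  rintro _ ⟨_, ⟨x, hx, c₁, hc₁, rfl⟩, _, ⟨y, hy, c₂, hc₂, rfl⟩, hst, rfl⟩
  have hdiff : x + c₁ - (y + c₂) = x - y + (c₁ - c₂) := by abel
  rw [hdiff]
  by_cases hxy : x = y
  · subst hxy
    have hc : c₁ - c₂ ≠ 0 := sub_ne_zero.mpr fun h => hst (by rw [h])
    exact min_le_of_left_le (sInf_le ⟨c₁ - c₂, C.sub_mem hc₁ hc₂, hc, by rw [sub_self, zero_add]⟩)
  · have hxyC : x - y ∉ C := fun h => hxy (hrep x hx y hy h)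
    calc min (minWeight w C) (factorDist w C C')
        ≤ factorWeight w C (x - y) := min_le_of_right_le (sInf_le ⟨x, hx, y, hy, hxyC, rfl⟩)
      _ ≤ w (x - y + (c₁ - c₂)) := iInf₂_le _ (C.sub_mem hc₁ hc₂)

end CosetCode

theorem stmt14_general {Γ : Type*} [AddCommGroup Γ] (w : Γ → ℕ∞)
    (C : AddSubgroup Γ) (C' : Set Γ) (hC'ne : C'.Nonempty)
    -- `C'` is a set of coset representatives: distinct elements lie in distinct cosets
    (hrep : ∀ x ∈ C', ∀ y ∈ C', x - y ∈ C → x = y) :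
    -- the minimum distance of `C' + C` ...
    sInf {v : ℕ∞ | ∃ s ∈ C' + (C : Set Γ), ∃ t ∈ C' + (C : Set Γ), s ≠ t ∧ v = w (s - t)}
      -- ... equals the minimum of the minimum weight of `C` ...
      = min (sInf {v : ℕ∞ | ∃ c ∈ C, c ≠ (0 : Γ) ∧ v = w c})
            -- ... and the minimum factor-weight distance between distinct cosets in `C'`
            (sInf {v : ℕ∞ | ∃ x ∈ C', ∃ y ∈ C', x - y ∉ C ∧
              v = ⨅ c ∈ C, w (x - y + c)}) :=
  le_antisymm
    (le_min (minDist_add_addSubgroup_le_minWeight hC'ne) minDist_add_addSubgroup_le_factorDist)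
    (min_minWeight_factorDist_le_minDist hrep)

theorem stmt14 {Γ : Type*} [AddCommGroup Γ] (w : Γ → ℕ∞) (hw : ∀ x, w x = 0 ↔ x = 0)
    (C : AddSubgroup Γ) (C' : Set Γ) (hC'ne : C'.Nonempty)
    -- `C'` is a set of coset representatives: distinct elements lie in distinct cosets
    (hrep : ∀ x ∈ C', ∀ y ∈ C', x - y ∈ C → x = y) :
    -- the minimum distance of `C' + C` ...
    sInf {v : ℕ∞ | ∃ s ∈ C' + (C : Set Γ), ∃ t ∈ C' + (C : Set Γ), s ≠ t ∧ v = w (s - t)}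
      -- ... equals the minimum of the minimum weight of `C` ...
      = min (sInf {v : ℕ∞ | ∃ c ∈ C, c ≠ (0 : Γ) ∧ v = w c})
            -- ... and the minimum factor-weight distance between distinct cosets in `C'`
            (sInf {v : ℕ∞ | ∃ x ∈ C', ∃ y ∈ C', x - y ∉ C ∧
              v = ⨅ c ∈ C, w (x - y + c)}) :=
  stmt14_general w C C' hC'ne hrep
end

section
/- For q = 2^r + 1, the set C₁ = { (a₁,...,a_r) ∈ (Z/qZ)^r : a_r = 2a₁ + 4a₂ + ··· + 2^{r−1}a_{r−1} } is an independent set in the r-th strong power of the cycle C_q; that is, any two distinct elements of C₁ differ by at least 2 (cyclically) in some coordinate. -/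
/-! Write `d = x - y`. Since `2 ^ (r + 1) = -1` modulo `q = 2 ^ (r + 1) + 1`, the defining relation
of `C₁` gives `2 * ∑ 2 ^ j * d j = 0`, and `2` is invertible modulo `q`, so `∑ 2 ^ j * d j = 0`.
If all `d j` lift to integers in `{-1, 0, 1}`, the integer sum has absolute value at most
`2 ^ (r + 1) - 1 < q` and is divisible by `q`, hence vanishes; and a vanishing signed binary
expansion with digits in `{-1, 0, 1}` has all digits zero, so `x = y`. -/

open Finset

theorem sum_two_pow_mul_eq_zero_of_two_pow_eq_neg_one {R : Type*} [CommRing R] {r : ℕ}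
    (h2 : (2 : R) ^ (r + 1) = -1) (d : Fin (r + 1) → R)
    (hd : d (Fin.last r) = ∑ i : Fin r, (2 : R) ^ ((i : ℕ) + 1) * d i.castSucc) :
    ∑ j : Fin (r + 1), (2 : R) ^ (j : ℕ) * d j = 0 := by
  set s := ∑ j : Fin (r + 1), (2 : R) ^ (j : ℕ) * d j
  have h2s : 2 * s = 0 := by
    simp only [pow_succ', mul_assoc] at hd
    simp only [s, Fin.sum_univ_castSucc, Fin.val_castSucc, Fin.val_last, mul_add, mul_sum]
    linear_combination d (Fin.last r) * h2 - hd
  -- `2` is a unit, with inverse `-2 ^ r`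
  linear_combination (-(2 : R) ^ r) * h2s + s * h2

theorem abs_sum_two_pow_mul_le {n : ℕ} (e : Fin n → ℤ) (he : ∀ j, |e j| ≤ 1) :
    |∑ j : Fin n, 2 ^ (j : ℕ) * e j| ≤ 2 ^ n - 1 :=
  calc |∑ j : Fin n, 2 ^ (j : ℕ) * e j|
      ≤ ∑ j : Fin n, |2 ^ (j : ℕ) * e j| := abs_sum_le_sum_abs _ _
    _ ≤ ∑ j : Fin n, (2 : ℤ) ^ (j : ℕ) := sum_le_sum fun j _ => by
        rw [abs_mul, abs_pow, abs_two]
        exact mul_le_of_le_one_right (by positivity) (he j)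
    _ = 2 ^ n - 1 := by
        rw [Fin.sum_univ_eq_sum_range (fun j => (2 : ℤ) ^ j)]
        simpa using geom_sum_mul (2 : ℤ) n

theorem eq_zero_of_sum_two_pow_mul_eq_zero {n : ℕ} (e : Fin n → ℤ) (he : ∀ j, |e j| ≤ 1)
    (hs : ∑ j : Fin n, 2 ^ (j : ℕ) * e j = 0) : e = 0 := by
  induction n with
  | zero => exact Subsingleton.elim _ _
  | succ n ih =>
    rw [Fin.sum_univ_castSucc] at hs
    simp only [Fin.val_castSucc, Fin.val_last] at hs
    have hlow := abs_le.mp (abs_sum_two_pow_mul_le (fun j => e j.castSucc) fun j => he _)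
    -- the top term `± 2 ^ n` cannot be cancelled by the lower ones, of size at most `2 ^ n - 1`
    have hlast : e (Fin.last n) = 0 := by
      by_contra hne
      have hpos : (0 : ℤ) < 2 ^ n := by positivity
      obtain h | h : e (Fin.last n) = -1 ∨ e (Fin.last n) = 1 := by
        have := abs_le.mp (he (Fin.last n)); omega
      all_goals rw [h] at hs; linarith
    have hinit := ih (fun j => e j.castSucc) (fun j => he _) (by simpa [hlast] using hs)
    funext j
    induction j using Fin.lastCases with
    | last => exact hlast
    | cast j => exact congr_fun hinit j

theorem eq_zero_of_dvd_sum_two_pow_mul {n : ℕ} (e : Fin n → ℤ) (he : ∀ j, |e j| ≤ 1)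
    (hdvd : (2 ^ n + 1 : ℤ) ∣ ∑ j : Fin n, 2 ^ (j : ℕ) * e j) : e = 0 :=
  eq_zero_of_sum_two_pow_mul_eq_zero e he <|
    Int.eq_zero_of_abs_lt_dvd hdvd (by linarith [abs_sum_two_pow_mul_le e he])

theorem exists_int_abs_le_one_cast_eq_sub {R : Type*} [Ring R] {a b : R}
    (h : a = b ∨ a - b = 1 ∨ b - a = 1) : ∃ e : ℤ, |e| ≤ 1 ∧ (e : R) = a - b := by
  rcases h with h | h | h
  · exact ⟨0, by simp, by simp [h]⟩
  · exact ⟨1, by simp, by simp [h]⟩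
  · exact ⟨-1, by simp, by rw [← neg_sub, h]; simp⟩

theorem stmt15 (r : ℕ) (x y : Fin (r + 1) → ZMod (2 ^ (r + 1) + 1))
    (hx : x (Fin.last r) = ∑ i : Fin r, (2 : ZMod (2 ^ (r + 1) + 1)) ^ ((i : ℕ) + 1) * x i.castSucc)
    (hy : y (Fin.last r) = ∑ i : Fin r, (2 : ZMod (2 ^ (r + 1) + 1)) ^ ((i : ℕ) + 1) * y i.castSucc)
    (hxy : x ≠ y) :
    ∃ i : Fin (r + 1), x i ≠ y i ∧ x i - y i ≠ 1 ∧ y i - x i ≠ 1 := by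
  by_contra! hc
  choose e he_abs he using fun i => exists_int_abs_le_one_cast_eq_sub (a := x i) (b := y i)
    (by tauto)
  have h2 : (2 : ZMod (2 ^ (r + 1) + 1)) ^ (r + 1) = -1 := by
    have hq := ZMod.natCast_self (2 ^ (r + 1) + 1)
    push_cast at hq
    linear_combination hq
  have hsum := sum_two_pow_mul_eq_zero_of_two_pow_eq_neg_one h2 (x - y) (by
    simp only [Pi.sub_apply, hx, hy, ← sum_sub_distrib, mul_sub])
  have he0 : e = 0 := eq_zero_of_dvd_sum_two_pow_mul e he_abs <| by
    have := (ZMod.intCast_zmod_eq_zero_iff_dvd (∑ j : Fin (r + 1), 2 ^ (j : ℕ) * e j)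
      (2 ^ (r + 1) + 1)).mp (by push_cast; simpa [he] using hsum)
    exact_mod_cast this
  exact hxy (funext fun i => sub_eq_zero.mp (by rw [← he i, he0, Pi.zero_apply, Int.cast_zero]))
end

section
/- Let q be odd, n ≥ 1, d ≤ n, and let H : {0,1,...,n} → ℝ be given as H(u) = Σ_{ℓ=0}^n Ĥ_ℓ K_ℓ(u;q') with coefficients Ĥ_ℓ ≥ 0, Ĥ_0 > 0, and H(u) ≤ 0 for d ≤ u ≤ n, where q' = 1 + 1/cos(π/q) and K_ℓ(u;q') = Σ_j C(u,j)C(n−u,ℓ−j)(−1)^j(q'−1)^{ℓ−j}. Then any code C ⊆ (Z/qZ)^n with minimum distance ≥ d under the cycle semimetric satisfies |C| ≤ (q cos(π/q)/(1+cos(π/q)))^n · H(0)/Ĥ_0. -/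
open Finset Real

/-- The Krawtchouk polynomial `K_ℓ(u; q')` of the Hamming scheme of length `n`, with
(possibly non-integer) parameter `q'`. -/
noncomputable def Kr (n ℓ u : ℕ) (q' : ℝ) : ℝ :=
  ∑ j ∈ Finset.range (ℓ + 1),
    (u.choose j : ℝ) * ((n - u).choose (ℓ - j) : ℝ) * (-1) ^ j * (q' - 1) ^ (ℓ - j)

open Complex

section basics
variable (q : ℕ) [NeZero q]

local notation "ψ" => ZMod.stdAddChar (N := q)

lemma orth (w : ZMod q) : ∑ k : ZMod q, ψ (k * w) = if w = 0 then (q:ℂ) else 0 := by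
  split_ifs with h
  · simp only [h, mul_zero, AddChar.map_zero_eq_one, sum_const, card_univ]
    simp [ZMod.card]
  · have : (ZMod.stdAddChar (N := q)).mulShift w ≠ 1 := ZMod.isPrimitive_stdAddChar q h
    have := AddChar.sum_eq_zero_of_ne_one this
    simpa [AddChar.mulShift_apply, mul_comm] using this

lemma psi_exp (a : ZMod q) : ψ a = Complex.exp ((2*π*a.val/q : ℝ) * Complex.I) := by
  rw [ZMod.stdAddChar_apply, ZMod.toCircle_apply]
  push_cast
  ring_nf

lemma psi_add_neg (a : ZMod q) : ψ a + ψ (-a) = ((2 * Real.cos (2*π*a.val/q) : ℝ) : ℂ) := by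
  have h2 : ψ (-a) = Complex.exp (-((2*π*a.val/q : ℝ) * Complex.I)) := by
    rw [AddChar.map_neg_eq_inv, psi_exp, ← Complex.exp_neg]
  rw [psi_exp, h2, neg_mul_eq_neg_mul, ← Complex.two_cos]
  push_cast [Complex.ofReal_cos]
  ring_nf
end basics

section trig
variable (q : ℕ)

lemma cos_pos (hq3 : 3 ≤ q) : 0 < Real.cos (π/q) := by
  apply Real.cos_pos_of_mem_Ioo
  constructor
  · have : (0:ℝ) < π/q := by positivity
    linarith [Real.pi_pos]
  · have hq : (3:ℝ) ≤ q := by exact_mod_cast hq3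
    have : π/q ≤ π/3 := by
      apply div_le_div_of_nonneg_left Real.pi_pos.le (by norm_num) hq
    have h2 : π/3 < π/2 := by
      apply div_lt_div_of_pos_left Real.pi_pos (by norm_num) (by norm_num)
    linarith

/-- key: for `k < q`, `q` odd, `cos (2πk/q) ≥ -cos (π/q)`. -/
lemma cos_ge (hq3 : 3 ≤ q) (hodd : Odd q) (k : ℕ) (hk : k < q) :
    -Real.cos (π/q) ≤ Real.cos (2*π*k/q) := by
  have hq0 : 0 < q := by omega
  have hqpos : (0:ℝ) < q := by exact_mod_cast hq0
  have habs : |π - 2*π*k/q| = (π/q) * |(q:ℝ) - 2*k| := by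
    rw [← abs_of_pos (show (0:ℝ) < π/q by positivity), ← abs_mul]
    congr 1
    field_simp
  have hint : (1:ℝ) ≤ |(q:ℝ) - 2*k| := by
    have : ((q:ℤ) - 2*k) ≠ 0 := by
      intro h
      have : (q:ℤ) = 2*k := by omega
      obtain ⟨m, hm⟩ := hodd
      omega
    have : 1 ≤ |(q:ℤ) - 2*k| := Int.one_le_abs this
    calc (1:ℝ) = ((1:ℤ):ℝ) := by norm_num
    _ ≤ |(((q:ℤ) - 2*k : ℤ) : ℝ)| := by rw [← Int.cast_abs]; exact_mod_cast this
    _ = |(q:ℝ) - 2*k| := by push_cast; ring_nf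
  have h1 : π/q ≤ |π - 2*π*k/q| := by
    rw [habs]
    nlinarith [Real.pi_pos, div_pos Real.pi_pos hqpos]
  have h2 : |π - 2*π*k/q| ≤ π := by
    rw [abs_le]
    constructor
    · have : 2*π*k/q ≤ 2*π := by
        rw [div_le_iff₀ hqpos]
        have : (k:ℝ) ≤ q := by exact_mod_cast hk.le
        nlinarith [Real.pi_pos]
      linarith
    · have : 0 ≤ 2*π*k/q := by positivity
      linarith
  have h3 : Real.cos |π - 2*π*k/q| ≤ Real.cos (π/q) :=
    Real.cos_le_cos_of_nonneg_of_le_pi (by positivity) h2 h1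
  have h4 : Real.cos (2*π*k/q) = -Real.cos (π - 2*π*k/q) := by
    rw [Real.cos_pi_sub]; ring
  rw [h4, Real.cos_abs] at *
  linarith
end trig

section cc
variable (q : ℕ) [NeZero q]

/-- the special element `c = (q-1)/2` of `ZMod q`. -/
def cc : ZMod q := (((q-1)/2 : ℕ) : ZMod q)

lemma cc_val (hq3 : 3 ≤ q) : (cc q).val = (q-1)/2 := by
  rw [cc, ZMod.val_natCast_of_lt (by omega)]

lemma cos_cc (hq3 : 3 ≤ q) (hodd : Odd q) :
    Real.cos (2*π*((cc q).val : ℝ)/q) = -Real.cos (π/q) := by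
  rw [cc_val q hq3]
  obtain ⟨m, hm⟩ := hodd
  have h2 : ((q-1)/2 : ℕ) = m := by omega
  have hq0 : (q:ℝ) ≠ 0 := by positivity
  have hmr : (2*m+1 : ℝ) = q := by exact_mod_cast hm.symm
  have : 2*π*(((q-1)/2 : ℕ) : ℝ)/q = π - π/q := by
    rw [h2]
    field_simp
    nlinarith [Real.pi_pos]
  rw [this, Real.cos_pi_sub]

lemma cc_ne_zero (hq3 : 3 ≤ q) : cc q ≠ 0 := by
  intro h
  have := cc_val q hq3
  rw [h, ZMod.val_zero] at this
  omega

lemma cc_ne_neg (hq3 : 3 ≤ q) : cc q ≠ -cc q := by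
  intro h
  have h2 : cc q + cc q = 0 := by
    nth_rewrite 1 [h]; ring
  rw [cc, ← Nat.cast_add, ZMod.natCast_eq_zero_iff] at h2
  have := Nat.le_of_dvd (by omega) h2
  omega
end cc

section g1
variable (q : ℕ) [NeZero q]

local notation "ψ" => ZMod.stdAddChar (N := q)

/-- `β = 1/(2 cos(π/q))`. -/
noncomputable def bet : ℝ := 1/(2*Real.cos (π/q))

/-- the Lovász-type assignment on one coordinate. -/
noncomputable def g1 (v : ZMod q) : ℝ :=
  if v = 0 then 1 else if v = 1 ∨ v = -1 then bet q else 0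

/-- the Fourier coefficients of `g1`. -/
noncomputable def gh1 (k : ZMod q) : ℝ := 1 + bet q * (2 * Real.cos (2*π*(k.val:ℝ)/q))

lemma gh1_nonneg (hq3 : 3 ≤ q) (hodd : Odd q) (k : ZMod q) : 0 ≤ gh1 q k := by
  have h1 := cos_ge q hq3 hodd k.val (ZMod.val_lt k)
  have h2 := cos_pos q hq3
  have hb : bet q * (2 * Real.cos (π/q)) = 1 := by
    rw [bet]; field_simp
  have hbpos : 0 < bet q := by rw [bet]; positivity
  have := mul_le_mul_of_nonneg_left (neg_le_neg h1) hbpos.le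
  rw [gh1]
  nlinarith
lemma gh1_zero : gh1 q 0 = 1 + bet q * 2 := by
  simp [gh1, ZMod.val_zero]

lemma two_ne_zmod (hq3 : 3 ≤ q) (hodd : Odd q) : (2 : ZMod q) ≠ 0 := by
  intro h
  have : ((2:ℕ) : ZMod q) = 0 := by exact_mod_cast h
  rw [ZMod.natCast_eq_zero_iff] at this
  have := Nat.le_of_dvd (by omega) this
  omega

lemma one_ne_zmod (hq3 : 3 ≤ q) : (1 : ZMod q) ≠ 0 := by
  intro h
  have : ((1:ℕ) : ZMod q) = 0 := by exact_mod_cast h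
  rw [ZMod.natCast_eq_zero_iff] at this
  have := Nat.le_of_dvd (by omega) this
  omega

/-- Fourier expansion of `g1`. -/
lemma g1_fourier (hq3 : 3 ≤ q) (hodd : Odd q) (v : ZMod q) :
    (q:ℂ) * ((g1 q v : ℝ) : ℂ) = ∑ k : ZMod q, ((gh1 q k : ℝ) : ℂ) * ψ (k * v) := by
  have h10 := one_ne_zmod q hq3
  have h20 := two_ne_zmod q hq3 hodd
  have expand : ∀ k : ZMod q, ((gh1 q k : ℝ) : ℂ) * ψ (k * v)
      = ψ (k * v) + (bet q : ℂ) * (ψ (k * (v+1)) + ψ (k * (v-1))) := by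
    intro k
    have hpc : ((gh1 q k : ℝ) : ℂ) = 1 + (bet q : ℂ) * (ψ k + ψ (-k)) := by
      rw [gh1, psi_add_neg q k]; push_cast; ring
    have e1 : ψ k * ψ (k*v) = ψ (k * (v+1)) := by
      rw [← AddChar.map_add_eq_mul]; ring_nf
    have e2 : ψ (-k) * ψ (k*v) = ψ (k * (v-1)) := by
      rw [← AddChar.map_add_eq_mul]; ring_nf
    rw [hpc]
    calc (1 + (bet q:ℂ) * (ψ k + ψ (-k))) * ψ (k*v)
        = ψ (k*v) + (bet q : ℂ) * (ψ k * ψ (k*v) + ψ (-k) * ψ (k*v)) := by ring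
      _ = _ := by rw [e1, e2]
  have horth : ∑ k : ZMod q, ((gh1 q k : ℝ):ℂ) * ψ (k*v)
      = (if v = 0 then (q:ℂ) else 0)
        + (bet q:ℂ) * ((if v = -1 then (q:ℂ) else 0) + (if v = 1 then (q:ℂ) else 0)) := by
    rw [Finset.sum_congr rfl (fun k _ => expand k), Finset.sum_add_distrib, ← Finset.mul_sum,
      Finset.sum_add_distrib, orth q v, orth q (v+1), orth q (v-1)]
    simp only [add_eq_zero_iff_eq_neg, sub_eq_zero]
  rw [horth, g1]
  by_cases h0 : v = 0
  · have hA : (0 : ZMod q) ≠ -1 := by intro h; exact h10 (by linear_combination h)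
    have hB : (0 : ZMod q) ≠ 1 := by intro h; exact h10 (by linear_combination -h)
    simp [h0, hA, hB]
  · by_cases h1 : v = 1
    · have hA : v ≠ -1 := by
        rw [h1]; intro h; exact h20 (by linear_combination h)
      simp only [if_neg h0, if_neg hA, if_pos h1, if_pos (Or.inl h1)]
      ring
    · by_cases h2 : v = -1
      · simp only [if_neg h0, if_pos h2, if_neg h1, if_pos (Or.inr h2)]
        ring
      · simp only [if_neg h0, if_neg h1, if_neg h2, if_neg (by tauto : ¬(v = 1 ∨ v = -1))]
        simp
end g1

section dim
variable (q n : ℕ) [NeZero q]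

local notation "ψ" => ZMod.stdAddChar (N := q)

/-- product character -/
noncomputable def ep (k z : Fin n → ZMod q) : ℂ := ∏ j, ψ (k j * z j)

lemma ep_add (k w z : Fin n → ZMod q) : ep q n (k+w) z = ep q n k z * ep q n w z := by
  rw [ep, ep, ep, ← Finset.prod_mul_distrib]
  apply Finset.prod_congr rfl
  intro j _
  rw [← AddChar.map_add_eq_mul, Pi.add_apply, add_mul]

lemma ep_zero (z : Fin n → ZMod q) : ep q n 0 z = 1 := by
  rw [ep]
  apply Finset.prod_eq_one
  intro j _
  simp

lemma conj_psi (a : ZMod q) : (starRingEnd ℂ) (ψ a) = ψ (-a) := by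
  rw [ZMod.stdAddChar_apply, ZMod.stdAddChar_apply, AddChar.map_neg_eq_inv,
    ← Circle.coe_inv_eq_conj]

lemma ep_sub (m x y : Fin n → ZMod q) :
    ep q n m (x - y) = ep q n m x * (starRingEnd ℂ) (ep q n m y) := by
  rw [ep, ep, ep, map_prod, ← Finset.prod_mul_distrib]
  apply Finset.prod_congr rfl
  intro j _
  rw [conj_psi, ← AddChar.map_add_eq_mul, Pi.sub_apply]
  congr 1
  ring

lemma sum_ep_pairs (C : Finset (Fin n → ZMod q)) (m : Fin n → ZMod q) :
    ∑ x ∈ C, ∑ y ∈ C, ep q n m (x - y)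
      = ((Complex.normSq (∑ x ∈ C, ep q n m x) : ℝ) : ℂ) := by
  have : ∑ x ∈ C, ∑ y ∈ C, ep q n m (x - y)
      = (∑ x ∈ C, ep q n m x) * ∑ y ∈ C, (starRingEnd ℂ) (ep q n m y) := by
    rw [Finset.sum_mul_sum]
    exact Finset.sum_congr rfl fun x _ => Finset.sum_congr rfl fun y _ => ep_sub q n m x y
  rw [this, ← map_sum, Complex.mul_conj]

/-- Fourier coefficients of the product assignment -/
noncomputable def Gh (k : Fin n → ZMod q) : ℝ := ∏ j, gh1 q (k j)

lemma Gh_nonneg (hq3 : 3 ≤ q) (hodd : Odd q) (k : Fin n → ZMod q) : 0 ≤ Gh q n k :=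
  Finset.prod_nonneg fun j _ => gh1_nonneg q hq3 hodd (k j)

lemma g_fourier (hq3 : 3 ≤ q) (hodd : Odd q) (z : Fin n → ZMod q) :
    (q:ℂ)^n * ((∏ j, g1 q (z j) : ℝ) : ℂ)
      = ∑ k : Fin n → ZMod q, ((Gh q n k : ℝ) : ℂ) * ep q n k z := by
  have : (q:ℂ)^n * ((∏ j, g1 q (z j) : ℝ) : ℂ)
      = ∏ j, ((q:ℂ) * ((g1 q (z j) : ℝ) : ℂ)) := by
    rw [Finset.prod_mul_distrib, Finset.prod_const]
    push_cast
    simp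
  rw [this]
  have : ∏ j, ((q:ℂ) * ((g1 q (z j) : ℝ) : ℂ))
      = ∏ j, ∑ k : ZMod q, ((gh1 q k : ℝ) : ℂ) * ψ (k * z j) := by
    exact Finset.prod_congr rfl fun j _ => g1_fourier q hq3 hodd (z j)
  rw [this]
  rw [Finset.prod_univ_sum]
  rw [Fintype.piFinset_univ]
  apply Finset.sum_congr rfl
  intro k _
  rw [ep, Gh]
  push_cast
  rw [← Finset.prod_mul_distrib]
end dim

section count
variable {n : ℕ}

lemma count_inter (ℓ : ℕ) (U : Finset (Fin n)) (f : ℕ → ℂ) :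
    ∑ A ∈ Finset.powersetCard ℓ (Finset.univ : Finset (Fin n)), f ((A ∩ U).card)
    = ∑ j ∈ Finset.range (ℓ+1),
        (U.card.choose j : ℂ) * ((n - U.card).choose (ℓ - j) : ℂ) * f j := by
  have key : ∑ A ∈ Finset.powersetCard ℓ (Finset.univ : Finset (Fin n)), f ((A ∩ U).card)
      = ∑ p ∈ (Finset.range (ℓ+1)).sigma
          (fun j => Finset.powersetCard j U ×ˢ Finset.powersetCard (ℓ - j) Uᶜ), f p.1 := by
    apply Finset.sum_nbij' (i := fun A => ⟨(A ∩ U).card, (A ∩ U, A \ U)⟩)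
      (j := fun p => p.2.1 ∪ p.2.2)
    · intro A hA
      rw [Finset.mem_powersetCard] at hA
      obtain ⟨-, hAcard⟩ := hA
      rw [Finset.mem_sigma, Finset.mem_range, Finset.mem_product,
        Finset.mem_powersetCard, Finset.mem_powersetCard]
      have hc : (A ∩ U).card + (A \ U).card = A.card := Finset.card_inter_add_card_sdiff A U
      refine ⟨?_, ⟨Finset.inter_subset_right, rfl⟩, ⟨?_, ?_⟩⟩
      · show (A ∩ U).card < ℓ + 1
        omega
      · show A \ U ⊆ Uᶜ
        intro x hx
        rw [Finset.mem_sdiff] at hx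
        rw [Finset.mem_compl]
        exact hx.2
      · show (A \ U).card = ℓ - (A ∩ U).card
        omega
    · intro p hp
      rw [Finset.mem_sigma, Finset.mem_range, Finset.mem_product,
        Finset.mem_powersetCard, Finset.mem_powersetCard] at hp
      obtain ⟨hj, ⟨hB, hBc⟩, hB', hB'c⟩ := hp
      rw [Finset.mem_powersetCard]
      refine ⟨Finset.subset_univ _, ?_⟩
      rw [Finset.card_union_of_disjoint, hBc, hB'c]
      · omega
      · exact Finset.disjoint_left.mpr fun x hx hx' =>
          (Finset.mem_compl.mp (hB' hx')) (hB hx)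
    · intro A hA
      simp only
      ext x
      simp only [Finset.mem_union, Finset.mem_inter, Finset.mem_sdiff]
      tauto
    · intro p hp
      rw [Finset.mem_sigma, Finset.mem_range, Finset.mem_product,
        Finset.mem_powersetCard, Finset.mem_powersetCard] at hp
      obtain ⟨hj, ⟨hB, hBc⟩, hB', hB'c⟩ := hp
      have hd : ∀ x ∈ p.2.2, x ∉ U := fun x hx => Finset.mem_compl.mp (hB' hx)
      have h1 : (p.2.1 ∪ p.2.2) ∩ U = p.2.1 := by
        ext x
        simp only [Finset.mem_inter, Finset.mem_union]
        constructor
        · rintro ⟨h | h, hU⟩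
          · exact h
          · exact absurd hU (hd x h)
        · intro h
          exact ⟨Or.inl h, hB h⟩
      have h2 : (p.2.1 ∪ p.2.2) \ U = p.2.2 := by
        ext x
        simp only [Finset.mem_sdiff, Finset.mem_union]
        constructor
        · rintro ⟨h | h, hU⟩
          · exact absurd (hB h) hU
          · exact h
        · intro h
          exact ⟨Or.inr h, hd x h⟩
      rw [h1, h2, hBc]
    · intro A hA
      rfl
  rw [key, Finset.sum_sigma]
  apply Finset.sum_congr rfl
  intro j hj
  show ∑ _s ∈ Finset.powersetCard j U ×ˢ Finset.powersetCard (ℓ - j) Uᶜ, f j = _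
  rw [Finset.sum_const, Finset.card_product, Finset.card_powersetCard,
    Finset.card_powersetCard, Finset.card_compl, Fintype.card_fin]
  push_cast
  ring
end count

section hside
variable (q n : ℕ) [NeZero q]

local notation "ψ" => ZMod.stdAddChar (N := q)

/-- per-subset product term -/
noncomputable def PP (A : Finset (Fin n)) (z : Fin n → ZMod q) : ℂ :=
  ∏ j, (if j ∈ A then ψ (cc q * z j) + ψ (-cc q * z j) else 1)

/-- frequency support finset attached to `A` -/
def TA (A : Finset (Fin n)) : Finset (Fin n → ZMod q) :=
  Fintype.piFinset (fun j => if j ∈ A then ({cc q, -cc q} : Finset (ZMod q)) else {0})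

lemma PP_expand (hq3 : 3 ≤ q) (A : Finset (Fin n)) (z : Fin n → ZMod q) :
    PP q n A z = ∑ w ∈ TA q n A, ep q n w z := by
  simp only [PP, TA, ep]
  refine Eq.trans ?_ (Finset.prod_univ_sum
    (fun j => if j ∈ A then ({cc q, -cc q} : Finset (ZMod q)) else {0})
    (fun j v => ZMod.stdAddChar (v * z j)))
  apply Finset.prod_congr rfl
  intro j _
  by_cases hj : j ∈ A
  · rw [if_pos hj, if_pos hj, Finset.sum_pair (cc_ne_neg q hq3)]
  · rw [if_neg hj, if_neg hj]
    simp

/-- the test function `h` -/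
noncomputable def hfun (a : ℕ → ℝ) (z : Fin n → ZMod q) : ℂ :=
  ∑ ℓ ∈ Finset.range (n+1), ((a ℓ : ℝ) : ℂ) * ∑ A ∈ Finset.powersetCard ℓ Finset.univ, PP q n A z

lemma PP_eval (hq3 : 3 ≤ q) (hodd : Odd q) (ℓ : ℕ) (A : Finset (Fin n))
    (hA : A ∈ Finset.powersetCard ℓ (Finset.univ : Finset (Fin n)))
    (z : Fin n → ZMod q) (hz : ∀ j, z j = 0 ∨ z j = 1 ∨ z j = -1) :
    PP q n A z = ((-(2*Real.cos (π/q)) : ℝ) : ℂ)^((A ∩ Finset.univ.filter (fun j => z j ≠ 0)).card)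
      * 2^(ℓ - (A ∩ Finset.univ.filter (fun j => z j ≠ 0)).card) := by
  set U := Finset.univ.filter (fun j => z j ≠ 0) with hU
  rw [Finset.mem_powersetCard] at hA
  have hcc : ψ (cc q) + ψ (-cc q) = ((-(2*Real.cos (π/q)) : ℝ) : ℂ) := by
    rw [psi_add_neg q (cc q), cos_cc q hq3 hodd]
    push_cast; ring
  have hterm : ∀ j, (if j ∈ A then ψ (cc q * z j) + ψ (-cc q * z j) else 1)
      = if j ∈ A then (if z j = 0 then 2 else ((-(2*Real.cos (π/q)) : ℝ) : ℂ)) else 1 := by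
    intro j
    by_cases hj : j ∈ A
    · rw [if_pos hj, if_pos hj]
      rcases hz j with h | h | h
      · rw [h, if_pos rfl, mul_zero, mul_zero, AddChar.map_zero_eq_one]
        norm_num
      · rw [h, if_neg (by rw [h] at *; intro hh; exact one_ne_zmod q hq3 hh), mul_one, mul_one, hcc]
      · have hne : z j ≠ 0 := by
          rw [h]; intro hh
          exact one_ne_zmod q hq3 (by linear_combination -hh)
        rw [if_neg hne, h]
        rw [show cc q * -1 = -cc q by ring, show -cc q * -1 = cc q by ring, add_comm, hcc]
    · rw [if_neg hj, if_neg hj]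
  rw [PP, Finset.prod_congr rfl (fun j _ => hterm j), Finset.prod_ite_mem, Finset.univ_inter]
  rw [← Finset.prod_inter_mul_prod_diff A U]
  have h1 : ∀ j ∈ A ∩ U, (if z j = 0 then (2:ℂ) else ((-(2*Real.cos (π/q)) : ℝ) : ℂ))
      = ((-(2*Real.cos (π/q)) : ℝ) : ℂ) := by
    intro j hj
    rw [Finset.mem_inter, hU, Finset.mem_filter] at hj
    rw [if_neg hj.2.2]
  have h2 : ∀ j ∈ A \ U, (if z j = 0 then (2:ℂ) else ((-(2*Real.cos (π/q)) : ℝ) : ℂ)) = 2 := by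
    intro j hj
    rw [Finset.mem_sdiff] at hj
    have hju := hj.2
    rw [hU, Finset.mem_filter] at hju
    push_neg at hju
    exact if_pos (hju (Finset.mem_univ j))
  rw [Finset.prod_congr rfl h1, Finset.prod_congr rfl h2, Finset.prod_const, Finset.prod_const]
  have hcard : (A ∩ U).card + (A \ U).card = ℓ := by
    rw [Finset.card_inter_add_card_sdiff, hA.2]
  have : (A \ U).card = ℓ - (A ∩ U).card := by omega
  rw [this]
end hside

section heval
variable (q n : ℕ) [NeZero q]

lemma h_eval (hq3 : 3 ≤ q) (hodd : Odd q) (Hh : ℕ → ℝ) (z : Fin n → ZMod q)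
    (hz : ∀ j, z j = 0 ∨ z j = 1 ∨ z j = -1) :
    hfun q n (fun ℓ => Hh ℓ / (2*Real.cos (π/q))^ℓ) z
      = ((∑ ℓ ∈ Finset.range (n+1), Hh ℓ *
          Kr n ℓ ((Finset.univ.filter (fun j => z j ≠ 0)).card)
            (1 + 1/Real.cos (π/q)) : ℝ) : ℂ) := by
  have hc₀ := cos_pos q hq3
  set c₀ := Real.cos (π/q) with hc
  set U := Finset.univ.filter (fun j => z j ≠ 0) with hU
  rw [hfun]
  push_cast
  apply Finset.sum_congr rfl
  intro ℓ hℓ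
  rw [Finset.sum_congr rfl (fun A hA => PP_eval q n hq3 hodd ℓ A hA z hz)]
  rw [count_inter ℓ U (fun t => ((-(2*c₀) : ℝ) : ℂ)^t * 2^(ℓ - t))]
  rw [Kr, show (1 + 1/c₀) - 1 = 1/c₀ by ring]
  push_cast
  rw [Finset.mul_sum, Finset.mul_sum]
  apply Finset.sum_congr rfl
  intro j hj
  rw [Finset.mem_range] at hj
  have hj' : j ≤ ℓ := by omega
  have h2c : ((2*c₀ : ℝ) : ℂ) ≠ 0 := by
    exact_mod_cast (by positivity : (2*c₀:ℝ) ≠ 0)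
  have hcC : ((c₀ : ℝ) : ℂ) ≠ 0 := by
    exact_mod_cast (by positivity : (c₀:ℝ) ≠ 0)
  have hsplit : ((2*c₀:ℝ):ℂ)^ℓ = ((2*c₀:ℝ):ℂ)^j * ((2*c₀:ℝ):ℂ)^(ℓ-j) := by
    rw [← pow_add]; congr 1; omega
  have hkey : ((-(2*c₀):ℝ):ℂ)^j * 2^(ℓ-j) * (((2*c₀:ℝ):ℂ)^ℓ)⁻¹
      = (-1)^j * ((1/c₀ : ℝ):ℂ)^(ℓ-j) := by
    rw [hsplit, mul_inv]
    push_cast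
    rw [neg_pow]
    have e2 : ((1:ℂ)/(c₀:ℂ))^(ℓ-j) = 2^(ℓ-j) / (2*(c₀:ℂ))^(ℓ-j) := by
      rw [← div_pow]
      congr 1
      field_simp
    rw [e2]
    have e1 : ((2:ℂ)*(c₀:ℂ))^j ≠ 0 := by
      apply pow_ne_zero
      push_cast at h2c
      exact h2c
    have e3 : ((2:ℂ)*(c₀:ℂ))^(ℓ-j) ≠ 0 := by
      apply pow_ne_zero
      push_cast at h2c
      exact h2c
    field_simp
  push_cast at hkey ⊢
  linear_combination (((Finset.filter (fun j => z j ≠ 0) Finset.univ).card.choose j : ℂ)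
    * ((n - (Finset.filter (fun j => z j ≠ 0) Finset.univ).card).choose (ℓ - j) : ℂ)
    * (Hh ℓ : ℂ)) * hkey
end heval

section gdist
variable (q n : ℕ) [NeZero q]

lemma g1_nonneg (hq3 : 3 ≤ q) (v : ZMod q) : 0 ≤ g1 q v := by
  have := cos_pos q hq3
  rw [g1]
  split_ifs
  · norm_num
  · rw [bet]; positivity
  · exact le_refl 0

lemma dist_eq (hq3 : 3 ≤ q) (x y : Fin n → ZMod q)
    (hz : ∀ j, x j - y j = 0 ∨ x j - y j = 1 ∨ x j - y j = -1) :
    cycDistN x y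
      = (((Finset.univ.filter (fun j => x j - y j ≠ 0)).card : ℕ) : ℕ∞) := by
  have h10 := one_ne_zmod q hq3
  have hterm : ∀ j, cycDist q (x j) (y j)
      = if x j - y j = 0 then 0 else 1 := by
    intro j
    rcases hz j with h | h | h
    · rw [if_pos h, cycDist, if_pos (by rwa [← sub_eq_zero])]
    · have hne : x j ≠ y j := by
        intro hh; rw [hh, sub_self] at h; exact h10 h.symm
      rw [if_neg (by rw [h]; exact h10), cycDist, if_neg hne, if_pos (Or.inl h)]
    · have hne : x j ≠ y j := by
        intro hh; rw [hh, sub_self] at h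
        exact h10 (by linear_combination h)
      have h2 : y j - x j = 1 := by linear_combination -h
      rw [if_neg (by rw [h]; intro hh; exact h10 (by linear_combination -hh)),
        cycDist, if_neg hne, if_pos (Or.inr h2)]
  rw [cycDistN, Finset.sum_congr rfl (fun j _ => hterm j)]
  rw [Finset.sum_ite, Finset.sum_const, Finset.sum_const]
  simp only [smul_zero, zero_add, nsmul_eq_mul, mul_one, Finset.filter_ne']
end gdist

section main
variable (q n : ℕ) [NeZero q]

/-- flattened index set for the `h` frequencies -/
def DD : Finset ((_ : ℕ) × (_ : Finset (Fin n)) × (Fin n → ZMod q)) :=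
  (Finset.range (n+1)).sigma
    (fun ℓ => (Finset.powersetCard ℓ (Finset.univ : Finset (Fin n))).sigma (fun A => TA q n A))

lemma hfun_flat (hq3 : 3 ≤ q) (a : ℕ → ℝ) (z : Fin n → ZMod q) :
    hfun q n a z = ∑ p ∈ DD q n, ((a p.1 : ℝ) : ℂ) * ep q n p.2.2 z := by
  rw [DD, Finset.sum_sigma, hfun]
  apply Finset.sum_congr rfl
  intro ℓ _
  rw [Finset.sum_sigma, Finset.mul_sum]
  apply Finset.sum_congr rfl
  intro A hA
  rw [PP_expand q n hq3 A z, Finset.mul_sum]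

theorem main_bound (d : ℕ) (hodd : Odd q) (hq3 : 3 ≤ q) (hn : 1 ≤ n) (hd : d ≤ n)
    (Hh : ℕ → ℝ) (hpos : ∀ ℓ, 0 ≤ Hh ℓ) (h0 : 0 < Hh 0)
    (H : ℕ → ℝ)
    (hH : ∀ u ≤ n, H u = ∑ ℓ ∈ Finset.range (n + 1),
      Hh ℓ * Kr n ℓ u (1 + 1 / Real.cos (π / q)))
    (hHneg : ∀ u, d ≤ u → u ≤ n → H u ≤ 0)
    (C : Finset (Fin n → ZMod q))
    (hC : ∀ x ∈ C, ∀ y ∈ C, x ≠ y → (d : ℕ∞) ≤ cycDistN x y) :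
    (C.card : ℝ) ≤ (q * Real.cos (π / q) / (1 + Real.cos (π / q))) ^ n * (H 0 / Hh 0) := by
  have hc₀ := cos_pos q hq3
  -- the test function data
  set a : ℕ → ℝ := fun ℓ => Hh ℓ / (2*Real.cos (π/q))^ℓ with ha
  have ha_nonneg : ∀ ℓ, 0 ≤ a ℓ := by
    intro ℓ
    rw [ha]
    have : (0:ℝ) < (2*Real.cos (π/q))^ℓ := by positivity
    exact div_nonneg (hpos ℓ) this.le
  have ha0 : a 0 = Hh 0 := by rw [ha]; simp
  -- evaluation of hfun on small vectors
  have hfun_H : ∀ z : Fin n → ZMod q, (∀ j, z j = 0 ∨ z j = 1 ∨ z j = -1) →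
      hfun q n a z
        = ((H ((Finset.univ.filter (fun j => z j ≠ 0)).card) : ℝ) : ℂ) := by
    intro z hzc
    rw [ha, h_eval q n hq3 hodd Hh z hzc]
    have hu : (Finset.univ.filter (fun j => z j ≠ 0)).card ≤ n := by
      apply le_trans (Finset.card_filter_le _ _)
      simp
    rw [hH _ hu]
  -- the quadratic form
  set T : ℂ := ∑ x ∈ C, ∑ y ∈ C,
    ((∏ j, g1 q ((x-y) j) : ℝ) : ℂ) * hfun q n a (x-y) with hTdef
  -- upper bound on T.re
  have hpair : ∀ x ∈ C, ∀ y ∈ C,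
      ((((∏ j, g1 q ((x-y) j) : ℝ) : ℂ) * hfun q n a (x-y)).re)
        ≤ if x = y then H 0 else 0 := by
    intro x hx y hy
    by_cases hxy : x = y
    · rw [if_pos hxy, hxy, sub_self]
      rw [hfun_H 0 (fun j => Or.inl rfl)]
      have hfil : (Finset.univ.filter (fun j => (0 : Fin n → ZMod q) j ≠ 0)).card = 0 := by
        simp
      rw [hfil]
      have hg1 : (∏ j, g1 q ((0 : Fin n → ZMod q) j) : ℝ) = 1 := by
        apply Finset.prod_eq_one
        intro j _
        simp [g1]
      rw [hg1, ← Complex.ofReal_mul, Complex.ofReal_re, one_mul]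
    · rw [if_neg hxy]
      by_cases hcoord : ∀ j, (x - y) j = 0 ∨ (x - y) j = 1 ∨ (x - y) j = -1
      · rw [hfun_H (x-y) hcoord]
        have hgnn : 0 ≤ (∏ j, g1 q ((x-y) j) : ℝ) :=
          Finset.prod_nonneg fun j _ => g1_nonneg q hq3 _
        set u := (Finset.univ.filter (fun j => (x-y) j ≠ 0)).card with hu
        have hun : u ≤ n := by
          apply le_trans (Finset.card_filter_le _ _)
          simp
        have hdist : cycDistN x y
            = ((Finset.univ.filter (fun j => (x-y) j ≠ 0)).card : ℕ∞) :=
          dist_eq q n hq3 x y hcoord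
        have hdu : d ≤ u := by
          have := hC x hx y hy hxy
          rw [hdist, ← hu] at this
          exact_mod_cast this
        have hHu : H u ≤ 0 := hHneg u hdu hun
        rw [← Complex.ofReal_mul, Complex.ofReal_re]
        exact mul_nonpos_iff.mpr (Or.inl ⟨hgnn, hHu⟩)
      · push_neg at hcoord
        obtain ⟨j₀, h1, h2, h3⟩ := hcoord
        have hg0 : (∏ j, g1 q ((x-y) j) : ℝ) = 0 := by
          apply Finset.prod_eq_zero (Finset.mem_univ j₀)
          rw [g1, if_neg h1, if_neg (by tauto)]
        rw [hg0]
        simp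
  have hTre_upper : T.re ≤ (C.card : ℝ) * H 0 := by
    have h1 : T.re = ∑ x ∈ C, ∑ y ∈ C,
        ((((∏ j, g1 q ((x-y) j) : ℝ) : ℂ) * hfun q n a (x-y)).re) := by
      rw [hTdef, Complex.re_sum]
      exact Finset.sum_congr rfl fun x _ => Complex.re_sum _ _
    rw [h1]
    calc ∑ x ∈ C, ∑ y ∈ C,
          ((((∏ j, g1 q ((x-y) j) : ℝ) : ℂ) * hfun q n a (x-y)).re)
        ≤ ∑ x ∈ C, ∑ y ∈ C, (if x = y then H 0 else 0) :=
          Finset.sum_le_sum fun x hx => Finset.sum_le_sum fun y hy => hpair x hx y hy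
      _ = ∑ x ∈ C, H 0 := by
          apply Finset.sum_congr rfl
          intro x hx
          rw [Finset.sum_ite_eq C x (fun _ => H 0), if_pos hx]
      _ = (C.card : ℝ) * H 0 := by
          rw [Finset.sum_const, nsmul_eq_mul]
  -- Fourier expansion of T
  have hkeyz : ∀ z : Fin n → ZMod q,
      ((q:ℂ)^n * ((∏ j, g1 q (z j) : ℝ) : ℂ)) * hfun q n a z
        = ∑ kp ∈ (Finset.univ : Finset (Fin n → ZMod q)) ×ˢ DD q n,
            (((Gh q n kp.1 * a kp.2.1 : ℝ)) : ℂ) * ep q n (kp.1 + kp.2.2.2) z := by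
    intro z
    rw [g_fourier q n hq3 hodd z, hfun_flat q n hq3 a z, Finset.sum_mul_sum,
      Finset.sum_product]
    apply Finset.sum_congr rfl
    intro k _
    apply Finset.sum_congr rfl
    intro p _
    rw [ep_add]
    push_cast
    ring
  have hT2 : (q:ℂ)^n * T
      = ∑ kp ∈ (Finset.univ : Finset (Fin n → ZMod q)) ×ˢ DD q n,
          (((Gh q n kp.1 * a kp.2.1
              * Complex.normSq (∑ x ∈ C, ep q n (kp.1 + kp.2.2.2) x) : ℝ)) : ℂ) := by
    have step1 : (q:ℂ)^n * T = ∑ x ∈ C, ∑ y ∈ C,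
        ∑ kp ∈ (Finset.univ : Finset (Fin n → ZMod q)) ×ˢ DD q n,
            (((Gh q n kp.1 * a kp.2.1 : ℝ)) : ℂ) * ep q n (kp.1 + kp.2.2.2) (x-y) := by
      rw [hTdef, Finset.mul_sum]
      apply Finset.sum_congr rfl
      intro x _
      rw [Finset.mul_sum]
      apply Finset.sum_congr rfl
      intro y _
      rw [← hkeyz (x-y)]
      ring
    have swap1 : ∀ x : Fin n → ZMod q, ∑ y ∈ C,
        ∑ kp ∈ (Finset.univ : Finset (Fin n → ZMod q)) ×ˢ DD q n,
            (((Gh q n kp.1 * a kp.2.1 : ℝ)) : ℂ) * ep q n (kp.1 + kp.2.2.2) (x-y)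
        = ∑ kp ∈ (Finset.univ : Finset (Fin n → ZMod q)) ×ˢ DD q n, ∑ y ∈ C,
            (((Gh q n kp.1 * a kp.2.1 : ℝ)) : ℂ) * ep q n (kp.1 + kp.2.2.2) (x-y) :=
      fun x => Finset.sum_comm
    have swap2 : ∑ x ∈ C,
        ∑ kp ∈ (Finset.univ : Finset (Fin n → ZMod q)) ×ˢ DD q n, ∑ y ∈ C,
            (((Gh q n kp.1 * a kp.2.1 : ℝ)) : ℂ) * ep q n (kp.1 + kp.2.2.2) (x-y)
        = ∑ kp ∈ (Finset.univ : Finset (Fin n → ZMod q)) ×ˢ DD q n, ∑ x ∈ C, ∑ y ∈ C,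
            (((Gh q n kp.1 * a kp.2.1 : ℝ)) : ℂ) * ep q n (kp.1 + kp.2.2.2) (x-y) :=
      Finset.sum_comm
    rw [step1, Finset.sum_congr rfl (fun x _ => swap1 x), swap2]
    apply Finset.sum_congr rfl
    intro kp _
    have pull : ∑ x ∈ C, ∑ y ∈ C,
        (((Gh q n kp.1 * a kp.2.1 : ℝ)) : ℂ) * ep q n (kp.1 + kp.2.2.2) (x-y)
        = (((Gh q n kp.1 * a kp.2.1 : ℝ)) : ℂ)
            * ∑ x ∈ C, ∑ y ∈ C, ep q n (kp.1 + kp.2.2.2) (x-y) := by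
      rw [Finset.mul_sum]
      apply Finset.sum_congr rfl
      intro x _
      rw [Finset.mul_sum]
    rw [pull, sum_ep_pairs q n C (kp.1 + kp.2.2.2)]
    push_cast
    ring
  -- real form
  set c₀ := Real.cos (π / (q:ℝ)) with hc
  have hq0 : 0 < q := by omega
  have hqR : (0:ℝ) < (q:ℝ) := by exact_mod_cast hq0
  have hR : ((q:ℝ))^n * T.re
      = ∑ kp ∈ (Finset.univ : Finset (Fin n → ZMod q)) ×ˢ DD q n,
          (Gh q n kp.1 * a kp.2.1
            * Complex.normSq (∑ x ∈ C, ep q n (kp.1 + kp.2.2.2) x)) := by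
    have h1 := congrArg Complex.re hT2
    rw [show ((q:ℂ))^n = (((q:ℝ)^n : ℝ) : ℂ) by push_cast; ring,
      Complex.re_ofReal_mul] at h1
    simp only [Complex.re_sum, Complex.ofReal_re] at h1
    exact h1
  have hterm_nonneg : ∀ kp ∈ (Finset.univ : Finset (Fin n → ZMod q)) ×ˢ DD q n,
      0 ≤ Gh q n kp.1 * a kp.2.1
          * Complex.normSq (∑ x ∈ C, ep q n (kp.1 + kp.2.2.2) x) :=
    fun kp _ => mul_nonneg (mul_nonneg (Gh_nonneg q n hq3 hodd kp.1) (ha_nonneg kp.2.1))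
      (Complex.normSq_nonneg _)
  have hmem : ((0 : Fin n → ZMod q),
      (⟨0, ⟨∅, (0 : Fin n → ZMod q)⟩⟩ : (_ : ℕ) × (_ : Finset (Fin n)) × (Fin n → ZMod q)))
      ∈ (Finset.univ : Finset (Fin n → ZMod q)) ×ˢ DD q n := by
    rw [Finset.mem_product]
    refine ⟨Finset.mem_univ _, ?_⟩
    rw [DD, Finset.mem_sigma]
    refine ⟨by simp, ?_⟩
    rw [Finset.mem_sigma]
    refine ⟨by simp, ?_⟩
    rw [TA, Fintype.mem_piFinset]
    intro j
    simp
  have hGh0 : Gh q n 0 = (1 + 1/c₀)^n := by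
    rw [Gh]
    have : ∀ j : Fin n, gh1 q ((0 : Fin n → ZMod q) j) = 1 + 1/c₀ := by
      intro j
      rw [Pi.zero_apply, gh1_zero, bet]
      field_simp
      rw [← hc]
      field_simp
    rw [Finset.prod_congr rfl (fun j _ => this j), Finset.prod_const]
    simp
  have hsum0 : ∑ x ∈ C, ep q n ((0 : Fin n → ZMod q) + (0 : Fin n → ZMod q)) x
      = (C.card : ℂ) := by
    rw [add_zero]
    rw [Finset.sum_congr rfl (fun x _ => ep_zero q n x), Finset.sum_const, nsmul_eq_mul,
      mul_one]
  have hlower : (1 + 1/c₀)^n * Hh 0 * ((C.card:ℝ))^2 ≤ ((q:ℝ))^n * T.re := by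
    rw [hR]
    have := Finset.single_le_sum hterm_nonneg hmem
    refine le_trans (le_of_eq ?_) this
    show _ = Gh q n 0 * a 0
        * Complex.normSq (∑ x ∈ C, ep q n ((0 : Fin n → ZMod q) + (0:Fin n → ZMod q)) x)
    rw [hGh0, ha0, hsum0, Complex.normSq_natCast]
    push_cast
    ring
  have hcomb : (1 + 1/c₀)^n * Hh 0 * ((C.card:ℝ))^2 ≤ ((q:ℝ))^n * ((C.card:ℝ) * H 0) :=
    le_trans hlower (mul_le_mul_of_nonneg_left hTre_upper (by positivity))
  have hH0 : 0 ≤ H 0 := by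
    rw [hH 0 (by omega)]
    apply Finset.sum_nonneg
    intro ℓ _
    apply mul_nonneg (hpos ℓ)
    rw [Kr]
    apply Finset.sum_nonneg
    intro j _
    rcases j with _ | j
    · simp only [Nat.choose_self, pow_zero, Nat.cast_one, one_mul, Nat.sub_zero, mul_one]
      rw [show (1 + 1/c₀) - 1 = 1/c₀ by ring]
      positivity
    · simp [Nat.choose_zero_succ]
  have hpow_pos : (0:ℝ) < (1 + 1/c₀)^n * Hh 0 := by positivity
  have hident : ((q:ℝ) * c₀ / (1 + c₀))^n * (H 0 / Hh 0)
      = ((q:ℝ)^n * H 0) / ((1 + 1/c₀)^n * Hh 0) := by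
    have h1 : (q:ℝ)*c₀/(1+c₀) = (q:ℝ)/(1+1/c₀) := by
      rw [div_eq_div_iff (by positivity) (by positivity)]
      field_simp
      ring
    rw [h1, div_pow, div_mul_div_comm]
  rcases Nat.eq_zero_or_pos C.card with hc0 | hcpos
  · rw [hc0]
    push_cast
    exact mul_nonneg (by positivity) (div_nonneg hH0 h0.le)
  · have hcR : (0:ℝ) < (C.card:ℝ) := by exact_mod_cast hcpos
    rw [hident, le_div_iff₀ hpow_pos]
    have h2 : (C.card:ℝ) * ((1+1/c₀)^n * Hh 0 * (C.card:ℝ))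
        ≤ (C.card:ℝ) * ((q:ℝ)^n * H 0) := by nlinarith [hcomb]
    have h3 := le_of_mul_le_mul_left h2 hcR
    nlinarith [h3]
end main

theorem stmt18 (q n d : ℕ) (hodd : Odd q) (hq3 : 3 ≤ q) (hn : 1 ≤ n) (hd : d ≤ n)
    (Hh : ℕ → ℝ) (hpos : ∀ ℓ, 0 ≤ Hh ℓ) (h0 : 0 < Hh 0)
    (H : ℕ → ℝ)
    (hH : ∀ u ≤ n, H u = ∑ ℓ ∈ Finset.range (n + 1),
      Hh ℓ * Kr n ℓ u (1 + 1 / Real.cos (π / q)))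
    (hHneg : ∀ u, d ≤ u → u ≤ n → H u ≤ 0)
    (C : Finset (Fin n → ZMod q))
    (hC : ∀ x ∈ C, ∀ y ∈ C, x ≠ y → (d : ℕ∞) ≤ cycDistN x y) :
    (C.card : ℝ) ≤ (q * Real.cos (π / q) / (1 + Real.cos (π / q))) ^ n * (H 0 / Hh 0) := by
  haveI : NeZero q := ⟨by omega⟩
  exact main_bound q n d hodd hq3 hn hd Hh hpos h0 H hH hHneg C hC
end

section
/- R*(C₅, δ) ≥ (1/2)log 5 + (1/2)(log 5 − H₅(2δ)) for 0 ≤ δ < 2/5, where H₅(x) = x log 4 − x log x − (1−x)log(1−x); i.e., there exist codes in (Z/5Z)^n of rate (1/2)log5 + (1/2)R_GV(5, 2δ) and minimum cycle-semimetric distance ≥ δn (asymptotically). -/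
open Finset Real Filter

/-- The `q`-ary entropy-type function `H_q(x) = x log(q-1) − x log x − (1−x) log(1−x)`
for `q = 5`. -/
noncomputable def H5 (x : ℝ) : ℝ :=
  x * Real.log 4 - x * Real.log x - (1 - x) * Real.log (1 - x)

/-!
Multiplying a difference `±1` in `ZMod 5` by `2` gives `±2`, so two words `(u, 2u)` and `(u', 2u')`
with `u ≠ u'` are at infinite cycle distance: `{(u, 2u)}` is a zero-error code for the pentagon.
Its cosets `(0, c) + {(u, 2u)}`, `c ∈ (ZMod 5)^k`, then behave like the Hamming space: words in
different cosets are at cycle distance at least the Hamming distance of their labels. Taking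
`k = ⌊n/2⌋` and the labels from a Gilbert–Varshamov code of Hamming distance `> δn ≈ 2δk`, of size
at least `5^k / |ball| ≥ exp (k (log 5 - H₅(2δ)))`, gives `5^k exp (k (log 5 - H₅(2δ)))` words.
-/

open Topology

section CycleDistance

variable {q : ℕ}

lemma cycDist_self (x : ZMod q) : cycDist q x x = 0 := if_pos rfl

lemma one_le_cycDist {x y : ZMod q} (h : x ≠ y) : 1 ≤ cycDist q x y := by
  rw [cycDist, if_neg h]
  split_ifs <;> simp

lemma cycDist_eq_sub_zero (x y : ZMod q) : cycDist q x y = cycDist q (x - y) 0 := by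
  simp only [cycDist, sub_zero, zero_sub, sub_eq_zero, neg_sub]

lemma cycDistN_append {m n : ℕ} (x x' : Fin m → ZMod q) (y y' : Fin n → ZMod q) :
    cycDistN (Fin.append x y) (Fin.append x' y') = cycDistN x x' + cycDistN y y' := by
  simp [cycDistN, Fin.sum_univ_add]

lemma cycDistN_self {n : ℕ} (x : Fin n → ZMod q) : cycDistN x x = 0 := by
  simp [cycDistN, cycDist_self]

end CycleDistance

lemma cycDist_five_eq_top_or (t : ZMod 5) (ht : t ≠ 0) :
    cycDist 5 t 0 = ⊤ ∨ cycDist 5 (2 * t) 0 = ⊤ := by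
  revert t; decide

lemma pentagon_pair_eq_top (c u u' : ZMod 5) (hu : u ≠ u') :
    cycDist 5 u u' + cycDist 5 (c + 2 * u) (c + 2 * u') = ⊤ := by
  rw [cycDist_eq_sub_zero u, cycDist_eq_sub_zero (c + _),
    show c + 2 * u - (c + 2 * u') = 2 * (u - u') by ring]
  rcases cycDist_five_eq_top_or (u - u') (sub_ne_zero.mpr hu) with h | h <;> simp [h]

lemma pentagon_pair_ge (c c' u u' : ZMod 5) :
    (if c ≠ c' then 1 else 0 : ℕ∞) ≤ cycDist 5 u u' + cycDist 5 (c + 2 * u) (c' + 2 * u') := by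
  split_ifs with hc
  · by_cases hu : u = u'
    · subst hu
      exact le_add_left (one_le_cycDist (by simpa using hc))
    · exact le_add_right (one_le_cycDist hu)
  · exact zero_le

/-- The coset `(0, c) + {(u, 2u)}` of the pentagon code, laid out as the blocks `u` and `c + 2u`
followed by `r` zeros. -/
def pentagonWord {k r : ℕ} (c u : Fin k → ZMod 5) : Fin (k + k + r) → ZMod 5 :=
  Fin.append (Fin.append u fun j => c j + 2 * u j) 0

lemma cycDistN_pentagonWord {k r : ℕ} (c u c' u' : Fin k → ZMod 5) :
    cycDistN (pentagonWord (r := r) c u) (pentagonWord c' u') =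
      ∑ j, (cycDist 5 (u j) (u' j) + cycDist 5 (c j + 2 * u j) (c' j + 2 * u' j)) := by
  rw [pentagonWord, pentagonWord, cycDistN_append, cycDistN_append, cycDistN_self, add_zero,
    cycDistN, cycDistN, Finset.sum_add_distrib]

lemma hammingDist_le_cycDistN_pentagonWord {k r : ℕ} (c u c' u' : Fin k → ZMod 5) :
    (hammingDist c c' : ℕ∞) ≤ cycDistN (pentagonWord (r := r) c u) (pentagonWord c' u') := by
  rw [cycDistN_pentagonWord, hammingDist, Finset.card_filter, Nat.cast_sum]
  refine Finset.sum_le_sum fun j _ => ?_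
  simpa using pentagon_pair_ge (c j) (c' j) (u j) (u' j)

lemma cycDistN_pentagonWord_eq_top {k r : ℕ} (c : Fin k → ZMod 5) {u u' : Fin k → ZMod 5}
    (hu : u ≠ u') : cycDistN (pentagonWord (r := r) c u) (pentagonWord c u') = ⊤ := by
  obtain ⟨j, hj⟩ := Function.ne_iff.mp hu
  rw [cycDistN_pentagonWord, ENat.sum_eq_top]
  exact ⟨j, Finset.mem_univ j, pentagon_pair_eq_top (c j) (u j) (u' j) hj⟩

lemma pentagonWord_injective {k r : ℕ} :
    Function.Injective fun p : (Fin k → ZMod 5) × (Fin k → ZMod 5) =>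
      pentagonWord (r := r) p.1 p.2 := by
  rintro ⟨c, u⟩ ⟨c', u'⟩ h
  dsimp only at h
  obtain rfl : u = u' := funext fun j => by
    simpa [pentagonWord] using congrFun h (Fin.castAdd r (Fin.castAdd k j))
  obtain rfl : c = c' := funext fun j => by
    have := congrFun h (Fin.castAdd r (Fin.natAdd k j))
    rwa [pentagonWord, pentagonWord, Fin.append_left, Fin.append_left, Fin.append_right,
      Fin.append_right, add_left_inj] at this
  rfl

theorem exists_cycDist_code_of_hammingDist_code {k n d : ℕ} (hkn : k + k ≤ n)
    (C' : Finset (Fin k → ZMod 5)) (hC' : ∀ c ∈ C', ∀ c' ∈ C', c ≠ c' → d ≤ hammingDist c c') :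
    ∃ C : Finset (Fin n → ZMod 5), C.card = C'.card * 5 ^ k ∧
      ∀ x ∈ C, ∀ y ∈ C, x ≠ y → (d : ℕ∞) ≤ cycDistN x y := by
  obtain ⟨r, rfl⟩ := Nat.exists_eq_add_of_le hkn
  refine ⟨(C' ×ˢ Finset.univ).image fun p => pentagonWord p.1 p.2, ?_, ?_⟩
  · rw [Finset.card_image_of_injective _ pentagonWord_injective, Finset.card_product,
      Finset.card_univ, Fintype.card_fun, ZMod.card, Fintype.card_fin]
  · simp only [Finset.mem_image, Finset.mem_product, Finset.mem_univ, and_true, Prod.exists]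
    rintro _ ⟨c, u, hc, rfl⟩ _ ⟨c', u', hc', rfl⟩ hne
    by_cases hcc : c = c'
    · subst hcc
      have hu : u ≠ u' := by rintro rfl; exact hne rfl
      simp [cycDistN_pentagonWord_eq_top c hu]
    · exact (Nat.cast_le.mpr (hC' c hc c' hc' hcc)).trans
        (hammingDist_le_cycDistN_pentagonWord c u c' u')

section HammingBall

variable {ι α : Type*} [Fintype ι] [DecidableEq ι] [Fintype α] [DecidableEq α]

lemma sum_pow_hammingNorm [Zero α] (t : ℝ) :
    ∑ z : ι → α, t ^ hammingNorm z = (1 + (Fintype.card α - 1) * t) ^ Fintype.card ι := by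
  have hz (z : ι → α) : t ^ hammingNorm z = ∏ i, if z i = 0 then 1 else t := by
    rw [Finset.prod_ite, Finset.prod_const_one, one_mul, Finset.prod_const, hammingNorm]
  have ha : ∑ a : α, (if a = 0 then 1 else t) = 1 + (Fintype.card α - 1) * t := by
    simp only [Finset.sum_ite, Finset.filter_eq', Finset.filter_ne', Finset.mem_univ, if_true,
      Finset.sum_const, Finset.card_singleton, Finset.card_erase_of_mem, Finset.card_univ,
      nsmul_eq_mul]
    rw [Nat.cast_sub Fintype.card_pos]
    push_cast; ring
  simp_rw [hz]
  rw [← Fintype.prod_sum fun _ a => if a = 0 then (1 : ℝ) else t, ha, Finset.prod_const,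
    Finset.card_univ]

lemma card_hammingNorm_le_mul_pow_le [Zero α] (m : ℕ) {t : ℝ} (ht0 : 0 < t) (ht1 : t ≤ 1) :
    (#{z : ι → α | hammingNorm z ≤ m} : ℝ) * t ^ m ≤
      (1 + (Fintype.card α - 1) * t) ^ Fintype.card ι := by
  rw [← sum_pow_hammingNorm, ← nsmul_eq_mul, ← Finset.sum_const]
  calc ∑ _z ∈ {z : ι → α | hammingNorm z ≤ m}, t ^ m
      ≤ ∑ z ∈ {z : ι → α | hammingNorm z ≤ m}, t ^ hammingNorm z :=
        Finset.sum_le_sum fun z hz => pow_le_pow_of_le_one ht0.le ht1 (Finset.mem_filter.mp hz).2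
    _ ≤ ∑ z : ι → α, t ^ hammingNorm z :=
        Finset.sum_le_sum_of_subset_of_nonneg (Finset.filter_subset _ _)
          fun z _ _ => by positivity

/-- The generating-function bound at `t = p / ((q - 1)(1 - p))`, where `1 + (q - 1) t = (1 - p)⁻¹`;
the constraint `p ≤ 1 - 1/q` is exactly `t ≤ 1`. -/
lemma card_hammingNorm_le_le_exp [Zero α] {m : ℕ} {p : ℝ} (hp0 : 0 < p)
    (hp : p ≤ 1 - (Fintype.card α : ℝ)⁻¹) (hm : m ≤ p * Fintype.card ι) :
    (#{z : ι → α | hammingNorm z ≤ m} : ℝ) ≤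
      exp (Fintype.card ι * qaryEntropy (Fintype.card α) p) := by
  set q : ℝ := (Fintype.card α : ℝ)
  set N : ℝ := (Fintype.card ι : ℝ)
  have hq : 1 < q := (inv_lt_one₀ (Nat.cast_pos.mpr Fintype.card_pos)).mp (by linarith)
  have hp1 : p < 1 := hp.trans_lt (sub_lt_self 1 (by positivity))
  set t := p / ((q - 1) * (1 - p))
  have ht0 : 0 < t := div_pos hp0 (mul_pos (by linarith) (by linarith))
  have ht1 : t ≤ 1 := by
    rw [div_le_one (mul_pos (by linarith) (by linarith))]
    have : p * q ≤ q - 1 := by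
      have := mul_le_mul_of_nonneg_right hp (by positivity : (0 : ℝ) ≤ q)
      rwa [sub_mul, inv_mul_cancel₀ (by positivity), one_mul] at this
    nlinarith
  have hlogt : log t = log p - log (q - 1) - log (1 - p) := by
    rw [log_div hp0.ne' (mul_pos (by linarith) (by linarith)).ne',
      log_mul (by linarith) (by linarith)]
    ring
  have hgen : 1 + (q - 1) * t = (1 - p)⁻¹ := by
    have : q - 1 ≠ 0 := by linarith
    have : 1 - p ≠ 0 := by linarith
    simp only [t]
    field_simp
    ring
  have hcard := card_hammingNorm_le_mul_pow_le (ι := ι) (α := α) m ht0 ht1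
  rw [hgen, ← le_div_iff₀ (pow_pos ht0 m)] at hcard
  refine hcard.trans ?_
  rw [← exp_log (pow_pos ht0 m), ← exp_log (pow_pos (inv_pos.mpr (sub_pos.mpr hp1)) _),
    ← exp_sub, exp_le_exp, log_pow, log_pow, log_inv]
  have hmlog : p * N * log t ≤ m * log t :=
    mul_le_mul_of_nonpos_right hm (log_nonpos ht0.le ht1)
  have hent : qaryEntropy (Fintype.card α) p =
      p * log (q - 1) - p * log p - (1 - p) * log (1 - p) := by
    simp only [qaryEntropy, binEntropy, log_inv, q]
    push_cast
    ring
  rw [hent]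
  rw [hlogt] at hmlog ⊢
  nlinarith

/-- A code with minimum distance `> r` of maximal size is a covering code of radius `r`. -/
lemma exists_hammingDist_code_covering (r : ℕ) :
    ∃ C : Finset (ι → α), (∀ c ∈ C, ∀ c' ∈ C, c ≠ c' → r < hammingDist c c') ∧
      ∀ x, ∃ c ∈ C, hammingDist x c ≤ r := by
  classical
  let codes := (Finset.univ : Finset (Finset (ι → α))).filter
    fun C => ∀ c ∈ C, ∀ c' ∈ C, c ≠ c' → r < hammingDist c c'
  obtain ⟨C, hC, hmax⟩ := codes.exists_max_image Finset.card ⟨∅, by simp [codes]⟩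
  have hCsep := (Finset.mem_filter.mp hC).2
  refine ⟨C, hCsep, fun x => ?_⟩
  by_contra! hfar
  have hx : x ∉ C := fun hx => by simpa using hfar x hx
  have hins : insert x C ∈ codes := by
    refine Finset.mem_filter.mpr ⟨Finset.mem_univ _, ?_⟩
    simp only [Finset.mem_insert]
    rintro c (rfl | hc) c' (rfl | hc') hne
    · exact absurd rfl hne
    · exact hfar c' hc'
    · exact hammingDist_comm c c' ▸ hfar c hc
    · exact hCsep c hc c' hc' hne
  have := hmax _ hins
  rw [Finset.card_insert_of_notMem hx] at this
  omega

theorem exists_hammingDist_code_card_mul_ge [AddGroup α] (r : ℕ) :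
    ∃ C : Finset (ι → α), (∀ c ∈ C, ∀ c' ∈ C, c ≠ c' → r < hammingDist c c') ∧
      Fintype.card α ^ Fintype.card ι ≤ #C * #{z : ι → α | hammingNorm z ≤ r} := by
  obtain ⟨C, hCsep, hcover⟩ := exists_hammingDist_code_covering (ι := ι) (α := α) r
  refine ⟨C, hCsep, ?_⟩
  have hball (c : ι → α) :
      #{x : ι → α | hammingDist x c ≤ r} ≤ #{z : ι → α | hammingNorm z ≤ r} :=
    Finset.card_le_card_of_injOn (-· + c)
      (fun x hx => by simpa [hammingDist_eq_hammingNorm] using hx)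
      (fun _ _ _ _ h => neg_injective (add_right_cancel h))
  calc Fintype.card α ^ Fintype.card ι = #(Finset.univ : Finset (ι → α)) := by simp
    _ ≤ #(C.biUnion fun c => {x : ι → α | hammingDist x c ≤ r}) :=
        Finset.card_le_card fun x _ => by simpa using hcover x
    _ ≤ ∑ c ∈ C, #{x : ι → α | hammingDist x c ≤ r} := Finset.card_biUnion_le
    _ ≤ #C * #{z : ι → α | hammingNorm z ≤ r} := by
        simpa using Finset.sum_le_sum fun c (_ : c ∈ C) => hball c

end HammingBall

theorem exists_cycDist_code_card_ge {k n r : ℕ} (hkn : k + k ≤ n) {p : ℝ} (hp0 : 0 < p)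
    (hp : p ≤ 1 - 5⁻¹) (hr : r ≤ p * k) :
    ∃ C : Finset (Fin n → ZMod 5),
      (∀ x ∈ C, ∀ y ∈ C, x ≠ y → ((r + 1 : ℕ) : ℕ∞) ≤ cycDistN x y) ∧
      exp (k * (2 * log 5 - qaryEntropy 5 p)) ≤ #C := by
  obtain ⟨C', hC'sep, hC'card⟩ :=
    exists_hammingDist_code_card_mul_ge (ι := Fin k) (α := ZMod 5) r
  obtain ⟨C, hCcard, hCdist⟩ := exists_cycDist_code_of_hammingDist_code hkn C' hC'sep
  refine ⟨C, hCdist, ?_⟩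
  have hball := card_hammingNorm_le_le_exp (ι := Fin k) (α := ZMod 5) hp0
    (by simpa using hp) (by simpa using hr)
  simp only [ZMod.card, Fintype.card_fin] at hC'card hball
  have h5k : exp (k * log 5) = 5 ^ k := by rw [exp_nat_mul, exp_log (by norm_num)]
  have hC' : exp (k * (log 5 - qaryEntropy 5 p)) ≤ #C' := by
    rw [mul_sub, exp_sub, h5k, div_le_iff₀ (exp_pos _)]
    calc (5 : ℝ) ^ k ≤ #C' * #{z : Fin k → ZMod 5 | hammingNorm z ≤ r} := mod_cast hC'card
      _ ≤ #C' * exp (k * qaryEntropy 5 p) := by gcongr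
  calc exp (k * (2 * log 5 - qaryEntropy 5 p))
      = exp (k * (log 5 - qaryEntropy 5 p)) * 5 ^ k := by
        rw [← h5k, ← exp_add]; ring_nf
    _ ≤ #C' * 5 ^ k := by gcongr
    _ = #C := by rw [hCcard]; push_cast; rfl

lemma exists_gt_le_qaryEntropy_le_add (q : ℕ) {x b ε : ℝ} (hxb : x < b) (hε : 0 < ε) :
    ∃ p, x < p ∧ p ≤ b ∧ qaryEntropy q p ≤ qaryEntropy q x + ε := by
  have hH : ∀ᶠ p in 𝓝 x, qaryEntropy q p < qaryEntropy q x + ε :=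
    (qaryEntropy_continuous.tendsto x).eventually (gt_mem_nhds (lt_add_of_pos_right _ hε))
  obtain ⟨p, ⟨hpH, hpb⟩, hxp⟩ :=
    (((hH.and (eventually_lt_nhds hxb)).filter_mono nhdsWithin_le_nhds).and
      (self_mem_nhdsWithin (s := Set.Ioi x))).exists
  exact ⟨p, hxp, hpb.le, hpH.le⟩

lemma H5_eq_qaryEntropy : H5 = qaryEntropy 5 := by
  ext x
  simp only [H5, qaryEntropy, binEntropy, log_inv]
  norm_num
  ring

theorem stmt19 (δ : ℝ) (hδ0 : 0 ≤ δ) (hδ : δ < 2 / 5) (ε : ℝ) (hε : 0 < ε) :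
    ∀ᶠ n : ℕ in Filter.atTop, ∃ C : Finset (Fin n → ZMod 5),
      (∀ x ∈ C, ∀ y ∈ C, x ≠ y → ((⌈δ * n⌉₊ : ℕ∞)) ≤ cycDistN x y) ∧
      Real.exp (n * ((1 / 2) * Real.log 5 +
        (1 / 2) * (Real.log 5 - H5 (2 * δ)) - ε)) ≤ (C.card : ℝ) := by
  obtain ⟨p, hδp, hp, hHp⟩ :=
    exists_gt_le_qaryEntropy_le_add 5 (show 2 * δ < 1 - 5⁻¹ by linarith) hε
  have hlog5 : 0 < log 5 := log_pos (by norm_num)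
  -- `n ≥ p / (p - 2δ)` gives `δn ≤ p ⌊n/2⌋`, and `n ≥ 2 log 5 / ε` pays for the factor `5` lost
  -- when `n` is odd.
  filter_upwards [tendsto_natCast_atTop_atTop.eventually_ge_atTop
    (max (p / (p - 2 * δ)) (2 * log 5 / ε))] with n hn
  rw [max_le_iff, div_le_iff₀ (by linarith), div_le_iff₀ hε] at hn
  have hk : (n : ℝ) ≤ 2 * (n / 2 : ℕ) + 1 ∧ 2 * ((n / 2 : ℕ) : ℝ) ≤ n := by
    constructor <;> norm_cast <;> omega
  have hr : (⌊δ * n⌋₊ : ℝ) ≤ p * (n / 2 : ℕ) :=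
    (Nat.floor_le (by positivity)).trans (by nlinarith)
  obtain ⟨C, hCdist, hCcard⟩ :=
    exists_cycDist_code_card_ge (k := n / 2) (n := n) (by omega) (by linarith) hp hr
  refine ⟨C, fun x hx y hy hxy => le_trans ?_ (hCdist x hx y hy hxy), le_trans ?_ hCcard⟩
  · exact_mod_cast Nat.ceil_le_floor_add_one _
  · rw [exp_le_exp, H5_eq_qaryEntropy]
    have := qaryEntropy_nonneg (q := 5) (by linarith : 0 ≤ p) (by linarith)
    nlinarith
end
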